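/- arXiv:2012.05624 — 2 statements merged into one kernel-verified Lean document; each statement's English description precedes it below -/
import Mathlib

section
/- Suppose Q ∈ M⁺_Δ, β₁, β₂, β₃ ≥ 0, and let i_0 be a vertex and [j_0,j_1] a 1-face of Δ such that {Q_{i_0}} ∩ conv{Q_{j_0},Q_{j_1}} = ∅. If i_0 is a boundary vertex and [j_0,j_1] is an interior 1-face, then D_Q(i_0,[j_0,j_1]) ≥ (min{β₁,β₂}/(√2·f(Q))) · min_{θ ∈ Θ} √(1 − cos²(θ)), where Θ is the set of four interior angles at Q_{j_0} and Q_{j_1} formed between the edge conv{Q_{j_0},Q_{j_1}} and the other edges of the two triangles of Σ_Δ(Q) that contain this edge. -/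
open scoped RealInnerProductSpace
open scoped Classical

noncomputable section

/-- Points in the plane `ℝ²`. -/
abbrev Pt : Type := EuclideanSpace ℝ (Fin 2)

/-- The determinant of the 2×2 matrix with columns `v` and `w`. -/
def det2 (v w : Pt) : ℝ := v 0 * w 1 - v 1 * w 0

/-- A connectivity complex on the vertex set `Fin N`: a pure, 2-path connected
abstract simplicial 2-complex. -/
structure ConnectivityComplex (N : ℕ) where
  faces : Finset (Finset (Fin N))
  faces_nonempty : faces.Nonempty
  mem_nonempty : ∀ σ ∈ faces, σ.Nonempty
  card_le_three : ∀ σ ∈ faces, σ.card ≤ 3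
  down_closed : ∀ σ ∈ faces, ∀ τ : Finset (Fin N), τ ⊆ σ → τ.Nonempty → τ ∈ faces
  pure : ∀ σ ∈ faces, ∃ τ ∈ faces, τ.card = 3 ∧ σ ⊆ τ
  two_path_connected : ∀ σ ∈ faces, ∀ τ ∈ faces, σ.card = 3 → τ.card = 3 → σ ≠ τ →
    ∃ (m : ℕ) (c : Fin (m + 1) → Finset (Fin N)),
      c 0 = σ ∧ c (Fin.last m) = τ ∧
      (∀ i, c i ∈ faces ∧ (c i).card = 3) ∧
      (∀ i : Fin m, (c i.castSucc ∩ c i.succ).card = 2)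

namespace PlanarMesh

variable {N : ℕ}

/-- The geometric realization `Σ_Δ(Q)`: the collection of the convex hulls of the
vertex positions of all faces of `Δ`. -/
def SigmaSet (Δ : ConnectivityComplex N) (Q : Fin N → Pt) : Set (Set Pt) :=
  { s | ∃ σ ∈ Δ.faces, s = convexHull ℝ (Q '' (σ : Set (Fin N))) }

/-- `Q` is an admissible assignment of vertex positions for `Δ`: `Σ_Δ(Q)` is a geometric
simplicial complex in `ℝ²` whose associated abstract simplicial complex is exactly `Δ`. -/
def IsAdmissible (Δ : ConnectivityComplex N) (Q : Fin N → Pt) : Prop :=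
  -- each member of `Σ_Δ(Q)` is a simplex, i.e. the convex hull of affinely independent points
  (∀ σ ∈ Δ.faces, AffineIndependent ℝ fun i : σ => Q i.1) ∧
  -- every face of a member of `Σ_Δ(Q)` belongs to `Σ_Δ(Q)`
  (∀ σ ∈ Δ.faces, ∀ ρ : Finset (Fin N), ρ ⊆ σ → ρ.Nonempty →
      convexHull ℝ (Q '' (ρ : Set (Fin N))) ∈ SigmaSet Δ Q) ∧
  -- the nonempty intersection of any two members is a common face of both
  (∀ σ ∈ Δ.faces, ∀ τ ∈ Δ.faces,
      (convexHull ℝ (Q '' (σ : Set (Fin N))) ∩ convexHull ℝ (Q '' (τ : Set (Fin N)))).Nonempty →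
      ∃ ρ : Finset (Fin N), ρ.Nonempty ∧ ρ ⊆ σ ∧ ρ ⊆ τ ∧
        convexHull ℝ (Q '' (σ : Set (Fin N))) ∩ convexHull ℝ (Q '' (τ : Set (Fin N)))
          = convexHull ℝ (Q '' (ρ : Set (Fin N)))) ∧
  -- the abstract simplicial complex associated with `Σ_Δ(Q)` is exactly `Δ`
  (∀ σ : Finset (Fin N), σ.Nonempty →
      convexHull ℝ (Q '' (σ : Set (Fin N))) ∈ SigmaSet Δ Q → σ ∈ Δ.faces)

/-- The set `M⁰_Δ` of admissible meshes with connectivity `Δ`. -/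
def M0 (Δ : ConnectivityComplex N) : Set (Fin N → Pt) := { Q | IsAdmissible Δ Q }

/-- The (oriented) edges induced by an oriented triangle `[o 0, o 1, o 2]`. -/
def inducedEdges (o : Fin 3 → Fin N) : Finset (Fin N × Fin N) :=
  {(o 1, o 2), (o 2, o 0), (o 0, o 1)}

/-- A consistently oriented connectivity complex: each 2-face carries an orientation,
and two 2-faces sharing a 1-face induce opposite orientations on that 1-face. -/
structure OrientedComplex (N : ℕ) extends ConnectivityComplex N where
  orient : Finset (Fin N) → (Fin 3 → Fin N)
  orient_spec : ∀ σ ∈ faces, σ.card = 3 → Finset.image (orient σ) Finset.univ = σ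
  consistent : ∀ σ ∈ faces, ∀ τ ∈ faces, σ.card = 3 → τ.card = 3 → σ ≠ τ →
    (σ ∩ τ).card = 2 → ∀ a b : Fin N, a ∈ σ ∩ τ → b ∈ σ ∩ τ → a ≠ b →
      ((a, b) ∈ inducedEdges (orient σ) ↔ (b, a) ∈ inducedEdges (orient τ))

variable (Δ : OrientedComplex N)

/-- The signed area `A_Q[i₀,i₁,i₂]` of an oriented triangle. -/
def signedArea (Q : Fin N → Pt) (o : Fin 3 → Fin N) : ℝ :=
  det2 (Q (o 1) - Q (o 0)) (Q (o 2) - Q (o 1)) / 2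

/-- The set `M⁺_Δ` of admissible oriented meshes. -/
def Mplus : Set (Fin N → Pt) :=
  { Q | Q ∈ M0 Δ.toConnectivityComplex ∧
      ∀ σ ∈ Δ.faces, σ.card = 3 → 0 < signedArea Q (Δ.orient σ) }

/-- The manifold of planar triangular meshes `M_Δ(Q_ref)`: all `Q ∈ M⁺_Δ` which can be
joined to `Q_ref` by a continuous path inside `M⁺_Δ`. -/
def Mmesh (Qref : Fin N → Pt) : Set (Fin N → Pt) :=
  { Q | JoinedIn (Mplus Δ) Qref Q }

/-- The length of the `ℓ`-th edge (the one opposite the `ℓ`-th vertex). -/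
def edgeLen (Q : Fin N → Pt) (o : Fin 3 → Fin N) (ℓ : Fin 3) : ℝ :=
  ‖Q (o (ℓ + 1)) - Q (o (ℓ + 2))‖

/-- The `ℓ`-th height (the one through the `ℓ`-th vertex). -/
def height (Q : Fin N → Pt) (o : Fin 3 → Fin N) (ℓ : Fin 3) : ℝ :=
  2 * signedArea Q o / edgeLen Q o ℓ

/-- The 2-faces of `Δ`. -/
def twoFaces : Finset (Finset (Fin N)) := Δ.faces.filter fun σ => σ.card = 3

/-- The boundary 1-faces `E_∂`: those contained in exactly one 2-face. -/
def boundaryEdges : Finset (Finset (Fin N)) :=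
  Δ.faces.filter fun e =>
    e.card = 2 ∧ (Δ.faces.filter fun σ => σ.card = 3 ∧ e ⊆ σ).card = 1

/-- An interior 1-face: one contained in exactly two 2-faces. -/
def IsInteriorEdge (e : Finset (Fin N)) : Prop :=
  e ∈ Δ.faces ∧ e.card = 2 ∧ (Δ.faces.filter fun σ => σ.card = 3 ∧ e ⊆ σ).card = 2

/-- The boundary vertices `V_∂`: those contained in some boundary 1-face. -/
def boundaryVertices : Finset (Fin N) :=
  Finset.univ.filter fun i => ∃ e ∈ boundaryEdges Δ, i ∈ e

/-- The 1-norm of `w` in a rotated coordinate system whose first axis is the unit vector `u`. -/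
def rot1norm (u w : Pt) : ℝ := |w 0 * u 0 + w 1 * u 1| + |w 1 * u 0 - w 0 * u 1|

/-- The unit direction from `a` to `b`. -/
def unitDir (a b : Pt) : Pt := ‖b - a‖⁻¹ • (b - a)

/-- The distance `D_Q(i, [j₀, j₁])` of vertex `i` from the edge `[j₀, j₁]`, measured in the
1-norm of a rotated coordinate system with one axis parallel to `Q j₁ - Q j₀`. -/
def Dpair (Q : Fin N → Pt) (i j0 j1 : Fin N) : ℝ :=
  sInf ((fun x => rot1norm (unitDir (Q j0) (Q j1)) (Q i - x)) '' segment ℝ (Q j0) (Q j1))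

/-- The distance `D_Q(i, e)` for an (unordered) 1-face `e`. -/
def Dedge (Q : Fin N → Pt) (i : Fin N) (e : Finset (Fin N)) : ℝ :=
  sInf { r | ∃ j0 ∈ e, ∃ j1 ∈ e, j0 ≠ j1 ∧ r = Dpair Q i j0 j1 }

/-- The squared Frobenius norm of `Q - R`. -/
def frobSq (Q R : Fin N → Pt) : ℝ := ∑ i, ‖Q i - R i‖ ^ 2

/-- The Frobenius norm of `Q`. -/
def frobNorm (Q : Fin N → Pt) : ℝ := Real.sqrt (∑ i, ‖Q i‖ ^ 2)

/-- The augmentation function `f`. -/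
def ffun (Qref : Fin N → Pt) (β1 β2 β3 : ℝ) (Q : Fin N → Pt) : ℝ :=
  (∑ σ ∈ twoFaces Δ, ∑ ℓ : Fin 3, β1 / height Q (Δ.orient σ) ℓ)
  + (∑ e ∈ boundaryEdges Δ,
      ∑ i ∈ (boundaryVertices Δ).filter (fun i => i ∉ e), β2 / Dedge Q i e)
  + β3 / 2 * frobSq Q Qref

/-- The semiperimeter of a triangle. -/
def semiPerimeter (Q : Fin N → Pt) (o : Fin 3 → Fin N) : ℝ :=
  (edgeLen Q o 0 + edgeLen Q o 1 + edgeLen Q o 2) / 2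

/-- The inradius of a triangle: area divided by semiperimeter. -/
def inradius (Q : Fin N → Pt) (o : Fin 3 → Fin N) : ℝ :=
  signedArea Q o / semiPerimeter Q o

/-- The circumradius of a triangle. -/
def circumradius (Q : Fin N → Pt) (o : Fin 3 → Fin N) : ℝ :=
  edgeLen Q o 0 * edgeLen Q o 1 * edgeLen Q o 2 / (4 * signedArea Q o)

/-- The interior angle of the triangle at the vertex `o ℓ`. -/
def interiorAngle (Q : Fin N → Pt) (o : Fin 3 → Fin N) (ℓ : Fin 3) : ℝ :=
  InnerProductGeometry.angle (Q (o (ℓ + 1)) - Q (o ℓ)) (Q (o (ℓ + 2)) - Q (o ℓ))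

/-- The set `Θ` of the four angles formed by the edge `[j₀,j₁]` and the adjacent 1-faces of the
two triangles of `Σ_Δ(Q)` containing this edge. -/
def ThetaSet (Δ : OrientedComplex N) (Q : Fin N → Pt) (j0 j1 : Fin N) : Set ℝ :=
  { θ | ∃ σ ∈ Δ.faces, σ.card = 3 ∧ j0 ∈ σ ∧ j1 ∈ σ ∧
      ∃ k ∈ σ, k ≠ j0 ∧ k ≠ j1 ∧
        (θ = InnerProductGeometry.angle (Q j1 - Q j0) (Q k - Q j0) ∨
         θ = InnerProductGeometry.angle (Q j0 - Q j1) (Q k - Q j1)) }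


/-! ### Auxiliary lemmas -/

section Aux

lemma aux_inner2 (v w : Pt) : (inner ℝ v w : ℝ) = v 0 * w 0 + v 1 * w 1 := by
  simp [PiLp.inner_apply, Fin.sum_univ_two, RCLike.inner_apply]; ring

lemma aux_normsq (v : Pt) : ‖v‖ ^ 2 = v 0 ^ 2 + v 1 ^ 2 := by
  rw [EuclideanSpace.norm_eq, Real.sq_sqrt (by positivity)]
  simp [Fin.sum_univ_two, sq_abs]

lemma aux_lagrange (v w : Pt) :
    (inner ℝ v w : ℝ) ^ 2 + det2 v w ^ 2 = ‖v‖ ^ 2 * ‖w‖ ^ 2 := by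
  rw [aux_inner2, aux_normsq, aux_normsq, det2]; ring

lemma aux_abs_det2_le (v w : Pt) : |det2 v w| ≤ ‖v‖ * ‖w‖ := by
  have h := aux_lagrange v w
  have h2 : det2 v w ^ 2 ≤ (‖v‖ * ‖w‖) ^ 2 := by nlinarith [sq_nonneg (inner ℝ v w : ℝ)]
  calc |det2 v w| = Real.sqrt ((det2 v w) ^ 2) := (Real.sqrt_sq_eq_abs _).symm
    _ ≤ Real.sqrt ((‖v‖ * ‖w‖) ^ 2) := Real.sqrt_le_sqrt h2
    _ = ‖v‖ * ‖w‖ := Real.sqrt_sq (by positivity)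

lemma aux_rot1norm_eq (u w : Pt) : rot1norm u w = |(inner ℝ w u : ℝ)| + |det2 u w| := by
  rw [rot1norm, aux_inner2, det2]
  congr 1 <;> congr 1 <;> ring

lemma aux_rot1norm_nonneg (u w : Pt) : 0 ≤ rot1norm u w :=
  add_nonneg (abs_nonneg _) (abs_nonneg _)

lemma aux_norm_le_rot1norm (u w : Pt) (hu : ‖u‖ = 1) : ‖w‖ ≤ rot1norm u w := by
  rw [aux_rot1norm_eq]
  have h := aux_lagrange w u
  rw [hu] at h
  have h2 : ‖w‖ ^ 2 = (inner ℝ w u : ℝ) ^ 2 + det2 u w ^ 2 := by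
    have : det2 u w = - det2 w u := by rw [det2, det2]; ring
    rw [this]; nlinarith
  nlinarith [abs_nonneg (inner ℝ w u : ℝ), abs_nonneg (det2 u w), norm_nonneg w,
    sq_abs (inner ℝ w u : ℝ), sq_abs (det2 u w), mul_nonneg (abs_nonneg (inner ℝ w u : ℝ)) (abs_nonneg (det2 u w))]

lemma aux_rot1norm_le (u w : Pt) (hu : ‖u‖ = 1) : rot1norm u w ≤ Real.sqrt 2 * ‖w‖ := by
  rw [aux_rot1norm_eq]
  have h := aux_lagrange w u
  rw [hu] at h
  have hd : det2 u w ^ 2 = det2 w u ^ 2 := by rw [det2, det2]; ring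
  have h2 : (|(inner ℝ w u : ℝ)| + |det2 u w|) ^ 2 ≤ (Real.sqrt 2 * ‖w‖) ^ 2 := by
    have hs : (Real.sqrt 2) ^ 2 = 2 := Real.sq_sqrt (by norm_num)
    have : (Real.sqrt 2 * ‖w‖) ^ 2 = 2 * ‖w‖ ^ 2 := by rw [mul_pow, hs]
    rw [this]
    nlinarith [sq_nonneg (|(inner ℝ w u : ℝ)| - |det2 u w|), sq_abs (inner ℝ w u : ℝ), sq_abs (det2 u w)]
  have hnn : 0 ≤ Real.sqrt 2 * ‖w‖ := by positivity
  nlinarith [add_nonneg (abs_nonneg (inner ℝ w u : ℝ)) (abs_nonneg (det2 u w))]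

lemma aux_sin_angle (x y : Pt) (hx : x ≠ 0) (hy : y ≠ 0) :
    Real.sqrt (1 - Real.cos (InnerProductGeometry.angle x y) ^ 2) = |det2 x y| / (‖x‖ * ‖y‖) := by
  have hxn : (0:ℝ) < ‖x‖ := norm_pos_iff.mpr hx
  have hyn : (0:ℝ) < ‖y‖ := norm_pos_iff.mpr hy
  rw [InnerProductGeometry.cos_angle]
  have h := aux_lagrange x y
  have : 1 - ((inner ℝ x y : ℝ) / (‖x‖ * ‖y‖)) ^ 2 = (det2 x y / (‖x‖ * ‖y‖)) ^ 2 := by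
    rw [aux_inner2] at h
    field_simp
    rw [aux_inner2]; nlinarith [h]
  rw [this, Real.sqrt_sq_eq_abs, abs_div,
    abs_of_pos (show (0:ℝ) < ‖x‖ * ‖y‖ by positivity)]

lemma aux_sin_le_one (θ : ℝ) : Real.sqrt (1 - Real.cos θ ^ 2) ≤ 1 := by
  have := Real.sqrt_le_sqrt (show 1 - Real.cos θ ^ 2 ≤ 1 by nlinarith [sq_nonneg (Real.cos θ)])
  simpa using this

end Aux

section DpairLemmas

variable {Q : Fin N → Pt} {i j0 j1 : Fin N}

lemma aux_dpair_lower (m : ℝ)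
    (h : ∀ x ∈ segment ℝ (Q j0) (Q j1), m ≤ rot1norm (unitDir (Q j0) (Q j1)) (Q i - x)) :
    m ≤ Dpair Q i j0 j1 := by
  refine le_csInf ⟨_, ⟨Q j0, left_mem_segment ℝ _ _, rfl⟩⟩ ?_
  rintro r ⟨x, hx, rfl⟩
  exact h x hx

lemma aux_dpair_nonneg : 0 ≤ Dpair Q i j0 j1 :=
  aux_dpair_lower 0 fun x _ => aux_rot1norm_nonneg _ _

lemma aux_dpair_le (x : Pt) (hx : x ∈ segment ℝ (Q j0) (Q j1)) :
    Dpair Q i j0 j1 ≤ rot1norm (unitDir (Q j0) (Q j1)) (Q i - x) := by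
  refine csInf_le ⟨0, ?_⟩ ⟨x, hx, rfl⟩
  rintro r ⟨y, hy, rfl⟩
  exact aux_rot1norm_nonneg _ _

lemma aux_dedge_nonneg {e : Finset (Fin N)} : 0 ≤ Dedge Q i e := by
  refine Real.sInf_nonneg ?_
  rintro r ⟨a, _, b, _, _, rfl⟩
  exact aux_dpair_nonneg

lemma aux_dedge_le {e : Finset (Fin N)} (hj0 : j0 ∈ e) (hj1 : j1 ∈ e) (hne : j0 ≠ j1) :
    Dedge Q i e ≤ Dpair Q i j0 j1 := by
  refine csInf_le ⟨0, ?_⟩ ⟨j0, hj0, j1, hj1, hne, rfl⟩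
  rintro r ⟨a, _, b, _, _, rfl⟩
  exact aux_dpair_nonneg

lemma aux_dedge_lower {e : Finset (Fin N)} (m : ℝ)
    (hne : ∃ a ∈ e, ∃ b ∈ e, a ≠ b)
    (hm : ∀ a ∈ e, ∀ b ∈ e, a ≠ b → m ≤ Dpair Q i a b) :
    m ≤ Dedge Q i e := by
  obtain ⟨a, ha, b, hb, hab⟩ := hne
  refine le_csInf ⟨_, ⟨a, ha, b, hb, hab, rfl⟩⟩ ?_
  rintro r ⟨a', ha', b', hb', hab', rfl⟩
  exact hm a' ha' b' hb' hab'

end DpairLemmas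

section HullTriple

lemma aux_mem_hull_triple {P0 P1 P2 : Pt} {c0 c1 c2 : ℝ}
    (h0 : 0 ≤ c0) (h1 : 0 ≤ c1) (h2 : 0 ≤ c2) (hs : c0 + c1 + c2 = 1) :
    c0 • P0 + c1 • P1 + c2 • P2 ∈ convexHull ℝ ({P0, P1, P2} : Set Pt) := by
  have hP0 : P0 ∈ convexHull ℝ ({P0, P1, P2} : Set Pt) :=
    subset_convexHull ℝ _ (by simp)
  have hP1 : P1 ∈ convexHull ℝ ({P0, P1, P2} : Set Pt) :=
    subset_convexHull ℝ _ (by simp)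
  have hP2 : P2 ∈ convexHull ℝ ({P0, P1, P2} : Set Pt) :=
    subset_convexHull ℝ _ (by simp)
  by_cases hc : c1 + c2 = 0
  · have hc1 : c1 = 0 := by linarith
    have hc2 : c2 = 0 := by linarith
    have hc0 : c0 = 1 := by linarith
    subst hc1; subst hc2; subst hc0
    simpa using hP0
  · have hd : 0 < c1 + c2 := lt_of_le_of_ne (by linarith) (Ne.symm hc)
    set M : Pt := (c1 / (c1 + c2)) • P1 + (c2 / (c1 + c2)) • P2 with hM
    have hMseg : M ∈ segment ℝ P1 P2 :=
      ⟨c1 / (c1 + c2), c2 / (c1 + c2), by positivity, by positivity, by field_simp, rfl⟩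
    have hMmem : M ∈ convexHull ℝ ({P0, P1, P2} : Set Pt) :=
      (convex_convexHull ℝ _).segment_subset hP1 hP2 hMseg
    have : c0 • P0 + c1 • P1 + c2 • P2 ∈ segment ℝ P0 M := by
      refine ⟨c0, c1 + c2, h0, hd.le, by linarith, ?_⟩
      rw [hM, smul_add, smul_smul, smul_smul]
      rw [mul_div_cancel₀ _ hc, mul_div_cancel₀ _ hc]
      abel
    exact (convex_convexHull ℝ _).segment_subset hP0 hMmem this

lemma aux_coords_of_mem {P0 P1 P2 ζ : Pt}
    (h : ζ ∈ convexHull ℝ ({P0, P1, P2} : Set Pt)) :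
    ∃ c0 c1 c2 : ℝ, 0 ≤ c0 ∧ 0 ≤ c1 ∧ 0 ≤ c2 ∧ c0 + c1 + c2 = 1 ∧
      ζ = c0 • P0 + c1 • P1 + c2 • P2 := by
  rw [show ({P0, P1, P2} : Set Pt) = insert P0 {P1, P2} from rfl,
    convexHull_insert ⟨P1, by simp⟩, convexHull_pair] at h
  rw [mem_convexJoin] at h
  obtain ⟨a, ha, b, hb, hab⟩ := h
  rw [Set.mem_singleton_iff] at ha
  subst ha
  obtain ⟨γ, δ, hγ, hδ, hγδ, rfl⟩ := hb
  obtain ⟨α, β, hα, hβ, hαβ, rfl⟩ := hab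
  refine ⟨α, β * γ, β * δ, hα, by positivity, by positivity, by nlinarith, ?_⟩
  rw [smul_add, smul_smul, smul_smul]
  abel

end HullTriple

section Cramer

lemma aux_det2_self (v : Pt) : det2 v v = 0 := by rw [det2]; ring

lemma aux_det2_swap (v w : Pt) : det2 v w = - det2 w v := by rw [det2, det2]; ring

lemma aux_cramer {e1 e2 : Pt} (hD : det2 e1 e2 ≠ 0) (w : Pt) :
    w = (det2 w e2 / det2 e1 e2) • e1 + (det2 e1 w / det2 e1 e2) • e2 := by
  have hD' : e1 0 * e2 1 - e1 1 * e2 0 ≠ 0 := hD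
  have hD'' : e2 1 * e1 0 - e2 0 * e1 1 ≠ 0 := by intro h; apply hD'; linarith
  ext i
  fin_cases i <;>
  · simp only [PiLp.add_apply, PiLp.smul_apply, smul_eq_mul, det2, Fin.zero_eta, Fin.mk_one]
    field_simp
    ring

lemma aux_det2_comb (a b : ℝ) (u v w : Pt) :
    det2 (a • u + b • v) w = a * det2 u w + b * det2 v w := by
  simp only [det2, PiLp.add_apply, PiLp.smul_apply, smul_eq_mul]
  ring

lemma aux_det2_comb' (a b : ℝ) (u v w : Pt) :
    det2 w (a • u + b • v) = a * det2 w u + b * det2 w v := by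
  simp only [det2, PiLp.add_apply, PiLp.smul_apply, smul_eq_mul]
  ring

end Cramer

section OrientFacts

variable {Δ : OrientedComplex N} {Q : Fin N → Pt} {σ : Finset (Fin N)}

lemma aux_orient_mem (hσ : σ ∈ Δ.faces) (h3 : σ.card = 3) (ℓ : Fin 3) :
    Δ.orient σ ℓ ∈ σ := by
  have h := Δ.orient_spec σ hσ h3
  have hmem : Δ.orient σ ℓ ∈ Finset.image (Δ.orient σ) Finset.univ :=
    Finset.mem_image_of_mem (Δ.orient σ) (Finset.mem_univ ℓ)
  rwa [h] at hmem

lemma aux_orient_inj (hσ : σ ∈ Δ.faces) (h3 : σ.card = 3) :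
    Function.Injective (Δ.orient σ) := by
  have h := Δ.orient_spec σ hσ h3
  have hcard : (Finset.univ.image (Δ.orient σ)).card = (Finset.univ : Finset (Fin 3)).card := by
    rw [h, h3]; simp
  intro a b hab
  exact Finset.injOn_of_card_image_eq hcard (Finset.mem_univ a) (Finset.mem_univ b) hab

lemma aux_orient_surj (hσ : σ ∈ Δ.faces) (h3 : σ.card = 3) {a : Fin N} (ha : a ∈ σ) :
    ∃ ℓ : Fin 3, Δ.orient σ ℓ = a := by
  have h := Δ.orient_spec σ hσ h3
  rw [← h] at ha
  obtain ⟨ℓ, _, hℓ⟩ := Finset.mem_image.mp ha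
  exact ⟨ℓ, hℓ⟩

lemma aux_signedArea_rot (Q : Fin N → Pt) (o : Fin 3 → Fin N) (ℓ : Fin 3) :
    2 * signedArea Q o = det2 (Q (o (ℓ+1)) - Q (o ℓ)) (Q (o (ℓ+2)) - Q (o (ℓ+1))) := by
  fin_cases ℓ <;>
    · simp only [show (⟨2, by norm_num⟩ : Fin 3) = 2 from rfl, Fin.reduceAdd, Fin.isValue,
        Fin.mk_one, Fin.zero_eta, signedArea, det2, PiLp.sub_apply]
      ring

lemma aux_perm3 (A B C P0 P1 P2 : Pt)
    (h : (A = P0 ∧ B = P1 ∧ C = P2) ∨ (A = P0 ∧ B = P2 ∧ C = P1) ∨ (A = P1 ∧ B = P0 ∧ C = P2)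
       ∨ (A = P1 ∧ B = P2 ∧ C = P0) ∨ (A = P2 ∧ B = P0 ∧ C = P1) ∨ (A = P2 ∧ B = P1 ∧ C = P0)) :
    det2 (B - A) (C - A) = det2 (P1 - P0) (P2 - P0) ∨
    det2 (B - A) (C - A) = - det2 (P1 - P0) (P2 - P0) := by
  rcases h with ⟨rfl,rfl,rfl⟩|⟨rfl,rfl,rfl⟩|⟨rfl,rfl,rfl⟩|⟨rfl,rfl,rfl⟩|⟨rfl,rfl,rfl⟩|⟨rfl,rfl,rfl⟩
  · left; rfl
  · right; simp only [det2, PiLp.sub_apply]; ring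
  · right; simp only [det2, PiLp.sub_apply]; ring
  · left; simp only [det2, PiLp.sub_apply]; ring
  · left; simp only [det2, PiLp.sub_apply]; ring
  · right; simp only [det2, PiLp.sub_apply]; ring

lemma aux_det2_eq_pm (hσ : σ ∈ Δ.faces) (h3 : σ.card = 3) {a b c : Fin N}
    (ha : a ∈ σ) (hb : b ∈ σ) (hc : c ∈ σ) (hab : a ≠ b) (hac : a ≠ c) (hbc : b ≠ c) :
    det2 (Q b - Q a) (Q c - Q a) = 2 * signedArea Q (Δ.orient σ) ∨
    det2 (Q b - Q a) (Q c - Q a) = - (2 * signedArea Q (Δ.orient σ)) := by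
  obtain ⟨i, hi⟩ := aux_orient_surj hσ h3 ha
  obtain ⟨j, hj⟩ := aux_orient_surj hσ h3 hb
  obtain ⟨k, hk⟩ := aux_orient_surj hσ h3 hc
  subst hi; subst hj; subst hk
  have hij : i ≠ j := fun h => hab (by rw [h])
  have hik : i ≠ k := fun h => hac (by rw [h])
  have hjk : j ≠ k := fun h => hbc (by rw [h])
  have hP : 2 * signedArea Q (Δ.orient σ) =
      det2 (Q (Δ.orient σ 1) - Q (Δ.orient σ 0)) (Q (Δ.orient σ 2) - Q (Δ.orient σ 0)) := by
    simp only [signedArea, det2, PiLp.sub_apply]; ring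
  rw [hP]
  have hperm : ∀ i j k : Fin 3, i ≠ j → i ≠ k → j ≠ k →
      (i=0∧j=1∧k=2)∨(i=0∧j=2∧k=1)∨(i=1∧j=0∧k=2)∨(i=1∧j=2∧k=0)∨(i=2∧j=0∧k=1)∨(i=2∧j=1∧k=0) := by
    decide
  rcases hperm i j k hij hik hjk with ⟨rfl,rfl,rfl⟩|⟨rfl,rfl,rfl⟩|⟨rfl,rfl,rfl⟩|⟨rfl,rfl,rfl⟩|⟨rfl,rfl,rfl⟩|⟨rfl,rfl,rfl⟩
  · exact aux_perm3 _ _ _ _ _ _ (Or.inl ⟨rfl, rfl, rfl⟩)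
  · exact aux_perm3 _ _ _ _ _ _ (Or.inr (Or.inl ⟨rfl, rfl, rfl⟩))
  · exact aux_perm3 _ _ _ _ _ _ (Or.inr (Or.inr (Or.inl ⟨rfl, rfl, rfl⟩)))
  · exact aux_perm3 _ _ _ _ _ _ (Or.inr (Or.inr (Or.inr (Or.inl ⟨rfl, rfl, rfl⟩))))
  · exact aux_perm3 _ _ _ _ _ _ (Or.inr (Or.inr (Or.inr (Or.inr (Or.inl ⟨rfl, rfl, rfl⟩)))))
  · exact aux_perm3 _ _ _ _ _ _ (Or.inr (Or.inr (Or.inr (Or.inr (Or.inr ⟨rfl, rfl, rfl⟩)))))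

lemma aux_abs_det2_face (hQ : Q ∈ Mplus Δ) (hσ : σ ∈ Δ.faces) (h3 : σ.card = 3) {a b c : Fin N}
    (ha : a ∈ σ) (hb : b ∈ σ) (hc : c ∈ σ) (hab : a ≠ b) (hac : a ≠ c) (hbc : b ≠ c) :
    |det2 (Q b - Q a) (Q c - Q a)| = 2 * signedArea Q (Δ.orient σ) := by
  have hsA : 0 < signedArea Q (Δ.orient σ) := hQ.2 σ hσ h3
  rcases aux_det2_eq_pm hσ h3 ha hb hc hab hac hbc with h | h
  · rw [h]; exact abs_of_pos (by linarith)
  · rw [h]; rw [abs_of_neg (by linarith)]; ring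

lemma aux_face_third {σ : Finset (Fin N)} (h3 : σ.card = 3) {a b : Fin N}
    (ha : a ∈ σ) (hb : b ∈ σ) (hab : a ≠ b) :
    ∃ c, c ∈ σ ∧ c ≠ a ∧ c ≠ b ∧ σ = {a, b, c} := by
  classical
  have hsub : ({a, b} : Finset (Fin N)) ⊆ σ := by
    intro x hx
    simp only [Finset.mem_insert, Finset.mem_singleton] at hx
    rcases hx with rfl | rfl <;> assumption
  have hne : ({a, b} : Finset (Fin N)) ≠ σ := by
    intro h; rw [← h, Finset.card_pair hab] at h3; norm_num at h3
  obtain ⟨c, hcσ, hc⟩ := Finset.exists_of_ssubset (hsub.ssubset_of_ne hne)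
  simp only [Finset.mem_insert, Finset.mem_singleton, not_or] at hc
  have hca : c ≠ a := hc.1
  have hcb : c ≠ b := hc.2
  have hsub' : ({a, b, c} : Finset (Fin N)) ⊆ σ := by
    intro x hx
    simp only [Finset.mem_insert, Finset.mem_singleton] at hx
    rcases hx with rfl | rfl | rfl <;> assumption
  have hm1 : a ∉ ({b, c} : Finset (Fin N)) := by
    simp only [Finset.mem_insert, Finset.mem_singleton, not_or]
    exact ⟨hab, fun h => hca h.symm⟩
  have hm2 : b ∉ ({c} : Finset (Fin N)) := by
    simp only [Finset.mem_singleton]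
    exact fun h => hcb h.symm
  have hcard : ({a, b, c} : Finset (Fin N)).card = 3 := by
    rw [Finset.card_insert_of_notMem hm1, Finset.card_insert_of_notMem hm2,
      Finset.card_singleton]
  exact ⟨c, hcσ, hca, hcb,
    (Finset.eq_of_subset_of_card_le hsub' (le_of_eq (by rw [h3, hcard]))).symm⟩

lemma aux_face_ne (hQ : Q ∈ Mplus Δ) (hσ : σ ∈ Δ.faces) (h3 : σ.card = 3) {a b : Fin N}
    (ha : a ∈ σ) (hb : b ∈ σ) (hab : a ≠ b) : Q a ≠ Q b := by
  obtain ⟨c, hcσ, hca, hcb, _⟩ := aux_face_third h3 ha hb hab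
  intro h
  have habs := aux_abs_det2_face hQ hσ h3 ha hb hcσ hab (Ne.symm hca) (Ne.symm hcb)
  have hsA : 0 < signedArea Q (Δ.orient σ) := hQ.2 σ hσ h3
  have : Q b - Q a = 0 := by rw [h]; simp
  rw [this] at habs
  simp only [det2] at habs
  have h0 : ((0 : Pt) 0) = 0 := rfl
  have h1 : ((0 : Pt) 1) = 0 := rfl
  rw [h0, h1] at habs
  simp at habs
  linarith

end OrientFacts

section FfunBounds

variable {Δ : OrientedComplex N} {Q Qref : Fin N → Pt} {σ : Finset (Fin N)}

lemma aux_fin3_succ_ne : ∀ ℓ : Fin 3, (ℓ+1 : Fin 3) ≠ ℓ+2 := by decide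

lemma aux_edgeLen_pos (hQ : Q ∈ Mplus Δ) (hσ : σ ∈ Δ.faces) (h3 : σ.card = 3) (ℓ : Fin 3) :
    0 < edgeLen Q (Δ.orient σ) ℓ := by
  have hne : Δ.orient σ (ℓ+1) ≠ Δ.orient σ (ℓ+2) := by
    intro h
    exact aux_fin3_succ_ne ℓ (aux_orient_inj hσ h3 h)
  have hQne : Q (Δ.orient σ (ℓ+1)) ≠ Q (Δ.orient σ (ℓ+2)) :=
    aux_face_ne hQ hσ h3 (aux_orient_mem hσ h3 _) (aux_orient_mem hσ h3 _) hne
  rw [edgeLen, norm_pos_iff]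
  exact sub_ne_zero_of_ne hQne

lemma aux_height_pos (hQ : Q ∈ Mplus Δ) (hσ : σ ∈ Δ.faces) (h3 : σ.card = 3) (ℓ : Fin 3) :
    0 < height Q (Δ.orient σ) ℓ := by
  have hsA := hQ.2 σ hσ h3
  rw [height]
  exact div_pos (by linarith) (aux_edgeLen_pos hQ hσ h3 ℓ)

lemma aux_frobSq_nonneg (Q R : Fin N → Pt) : 0 ≤ frobSq Q R :=
  Finset.sum_nonneg fun i _ => by positivity

lemma aux_ffun_ge_height {β1 β2 β3 : ℝ} (hβ1 : 0 ≤ β1) (hβ2 : 0 ≤ β2) (hβ3 : 0 ≤ β3)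
    (hQ : Q ∈ Mplus Δ) (hσ : σ ∈ Δ.faces) (h3 : σ.card = 3) (ℓ : Fin 3) :
    β1 / height Q (Δ.orient σ) ℓ ≤ ffun Δ Qref β1 β2 β3 Q := by
  have hterm : ∀ τ ∈ twoFaces Δ, (0:ℝ) ≤ ∑ ℓ' : Fin 3, β1 / height Q (Δ.orient τ) ℓ' := by
    intro τ hτ
    rw [twoFaces, Finset.mem_filter] at hτ
    exact Finset.sum_nonneg fun ℓ' _ => div_nonneg hβ1 (aux_height_pos hQ hτ.1 hτ.2 ℓ').le
  have h1 : β1 / height Q (Δ.orient σ) ℓ ≤ ∑ ℓ' : Fin 3, β1 / height Q (Δ.orient σ) ℓ' :=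
    Finset.single_le_sum (fun ℓ' _ => div_nonneg hβ1 (aux_height_pos hQ hσ h3 ℓ').le)
      (Finset.mem_univ ℓ)
  have hmem : σ ∈ twoFaces Δ := Finset.mem_filter.mpr ⟨hσ, h3⟩
  have h2 : (∑ ℓ' : Fin 3, β1 / height Q (Δ.orient σ) ℓ')
      ≤ ∑ τ ∈ twoFaces Δ, ∑ ℓ' : Fin 3, β1 / height Q (Δ.orient τ) ℓ' :=
    Finset.single_le_sum hterm hmem
  have h3' : 0 ≤ ∑ e ∈ boundaryEdges Δ,
      ∑ i ∈ (boundaryVertices Δ).filter (fun i => i ∉ e), β2 / Dedge Q i e :=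
    Finset.sum_nonneg fun e _ => Finset.sum_nonneg fun i _ => div_nonneg hβ2 aux_dedge_nonneg
  have h4 : 0 ≤ β3 / 2 * frobSq Q Qref := mul_nonneg (by linarith) (aux_frobSq_nonneg _ _)
  rw [ffun]; linarith

set_option maxHeartbeats 1000000 in
lemma aux_ffun_ge_dedge {β1 β2 β3 : ℝ} (hβ1 : 0 ≤ β1) (hβ2 : 0 ≤ β2) (hβ3 : 0 ≤ β3)
    (hQ : Q ∈ Mplus Δ) {e : Finset (Fin N)} (he : e ∈ boundaryEdges Δ)
    {i : Fin N} (hi : i ∈ boundaryVertices Δ) (hie : i ∉ e) :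
    β2 / Dedge Q i e ≤ ffun Δ Qref β1 β2 β3 Q := by
  have hterm : ∀ e' ∈ boundaryEdges Δ,
      (0:ℝ) ≤ ∑ i' ∈ (boundaryVertices Δ).filter (fun i' => i' ∉ e'), β2 / Dedge Q i' e' :=
    fun e' _ => Finset.sum_nonneg fun i' _ => div_nonneg hβ2 aux_dedge_nonneg
  have h1 : β2 / Dedge Q i e
      ≤ ∑ i' ∈ (boundaryVertices Δ).filter (fun i' => i' ∉ e), β2 / Dedge Q i' e :=
    Finset.single_le_sum (f := fun i' => β2 / Dedge Q i' e)
      (fun i' _ => div_nonneg hβ2 aux_dedge_nonneg)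
      (Finset.mem_filter.mpr ⟨hi, hie⟩)
  have h2 : (∑ i' ∈ (boundaryVertices Δ).filter (fun i' => i' ∉ e), β2 / Dedge Q i' e)
      ≤ ∑ e' ∈ boundaryEdges Δ,
          ∑ i' ∈ (boundaryVertices Δ).filter (fun i' => i' ∉ e'), β2 / Dedge Q i' e' :=
    Finset.single_le_sum hterm he
  have h3' : 0 ≤ ∑ τ ∈ twoFaces Δ, ∑ ℓ' : Fin 3, β1 / height Q (Δ.orient τ) ℓ' := by
    refine Finset.sum_nonneg fun τ hτ => ?_
    rw [twoFaces, Finset.mem_filter] at hτ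
    exact Finset.sum_nonneg fun ℓ' _ => div_nonneg hβ1 (aux_height_pos hQ hτ.1 hτ.2 ℓ').le
  have h4 : 0 ≤ β3 / 2 * frobSq Q Qref := mul_nonneg (by linarith) (aux_frobSq_nonneg _ _)
  rw [ffun]; linarith

lemma aux_div_f_le_height {β1 f : ℝ} (hβ1 : 0 < β1) (hf : 0 < f) {h : ℝ} (hh : 0 < h)
    (hle : β1 / h ≤ f) : β1 / f ≤ h := by
  rw [div_le_iff₀ hh] at hle
  rw [div_le_iff₀ hf]
  linarith [hle]

end FfunBounds

section NotMemHull

lemma aux_not_mem_hull {Δ : OrientedComplex N} {Q : Fin N → Pt}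
    (hQ : Q ∈ M0 Δ.toConnectivityComplex)
    {σ : Finset (Fin N)} (hσ : σ ∈ Δ.faces) {i : Fin N}
    (hi : ({i} : Finset (Fin N)) ∈ Δ.faces) (hiσ : i ∉ σ) :
    Q i ∉ convexHull ℝ (Q '' (σ : Set (Fin N))) := by
  intro hmem
  obtain ⟨-, -, hint, -⟩ := hQ
  have hQi : Q i ∈ convexHull ℝ (Q '' ((({i} : Finset (Fin N))) : Set (Fin N))) := by
    simp only [Finset.coe_singleton, Set.image_singleton, convexHull_singleton,
      Set.mem_singleton_iff]
  obtain ⟨ρ, hρne, hρ1, hρ2, -⟩ := hint {i} hi σ hσ ⟨Q i, hQi, hmem⟩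
  obtain ⟨x, hx⟩ := hρne
  have hxi : x = i := Finset.mem_singleton.mp (hρ1 hx)
  exact hiσ (hxi ▸ hρ2 hx)

end NotMemHull

section SideBound

lemma aux_det2_smul_left (c : ℝ) (y v : Pt) : det2 (c • y) v = c * det2 y v := by
  simp only [det2, PiLp.smul_apply, smul_eq_mul]; ring

lemma aux_det2_smul_right (c : ℝ) (y v : Pt) : det2 y (c • v) = c * det2 y v := by
  simp only [det2, PiLp.smul_apply, smul_eq_mul]; ring

lemma aux_det2_sub_right (y v w : Pt) : det2 y (v - w) = det2 y v - det2 y w := by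
  simp only [det2, PiLp.sub_apply]; ring

lemma aux_unitDir_norm {a b : Pt} (hne : a ≠ b) : ‖unitDir a b‖ = 1 := by
  rw [unitDir, norm_smul]
  have h : ‖b - a‖ ≠ 0 := by
    rw [norm_ne_zero_iff]
    exact sub_ne_zero_of_ne (Ne.symm hne)
  rw [norm_inv, norm_norm]
  field_simp

lemma aux_sideBound {w y z : Pt} (hy : y ≠ 0)
    (hwy : 0 ≤ (inner ℝ w y : ℝ))
    (hside : 0 < det2 y w * det2 y z)
    (hs : det2 w z * det2 y z < 0) :
    ‖w‖ * |det2 y z| ≤ |det2 y w| * ‖z‖ := by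
  have hyp : (0:ℝ) < ‖y‖ ^ 2 := by
    have h0 : (0:ℝ) < ‖y‖ := norm_pos_iff.mpr hy
    positivity
  have L1 := aux_lagrange w y
  have L2 := aux_lagrange z y
  have e1 : det2 w y = - det2 y w := aux_det2_swap w y
  have e2 : det2 z y = - det2 y z := aux_det2_swap z y
  have hdyz : det2 y z ≠ 0 := by
    intro h; rw [h, mul_zero] at hside; exact lt_irrefl _ hside
  have hmul : ‖y‖ ^ 2 * (det2 w z * det2 y z)
      = (inner ℝ w y : ℝ) * (det2 y z) ^ 2 - (det2 y w * det2 y z) * (inner ℝ z y : ℝ) := by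
    rw [aux_inner2, aux_inner2, aux_normsq]
    simp only [det2]
    ring
  have hneg : ‖y‖ ^ 2 * (det2 w z * det2 y z) < 0 := mul_neg_of_pos_of_neg hyp hs
  have h5 : (inner ℝ w y : ℝ) * (det2 y z) ^ 2 < (det2 y w * det2 y z) * (inner ℝ z y : ℝ) := by
    linarith [hmul ▸ hneg]
  have hizy : 0 < (inner ℝ z y : ℝ) := by
    nlinarith [mul_nonneg hwy (sq_nonneg (det2 y z)), hside, h5]
  have hsq : ((inner ℝ w y : ℝ) * (det2 y z) ^ 2) ^ 2
      ≤ ((det2 y w * det2 y z) * (inner ℝ z y : ℝ)) ^ 2 := by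
    nlinarith [mul_nonneg hwy (sq_nonneg (det2 y z)), h5]
  have hdz2 : (0:ℝ) < (det2 y z) ^ 2 :=
    lt_of_le_of_ne (sq_nonneg _) (Ne.symm (pow_ne_zero 2 hdyz))
  have key : (inner ℝ w y : ℝ) ^ 2 * (det2 y z) ^ 2 ≤ (det2 y w) ^ 2 * (inner ℝ z y : ℝ) ^ 2 := by
    nlinarith [hsq, hdz2]
  have hfin : (‖w‖ * |det2 y z|) ^ 2 ≤ (|det2 y w| * ‖z‖) ^ 2 := by
    have g1 : (‖w‖ * |det2 y z|) ^ 2 = ‖w‖ ^ 2 * (det2 y z) ^ 2 := by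
      rw [mul_pow, sq_abs]
    have g2 : (|det2 y w| * ‖z‖) ^ 2 = (det2 y w) ^ 2 * ‖z‖ ^ 2 := by
      rw [mul_pow, sq_abs]
    rw [g1, g2]
    have A1 : ‖w‖ ^ 2 * ‖y‖ ^ 2 * det2 y z ^ 2
        = (inner ℝ w y : ℝ) ^ 2 * det2 y z ^ 2 + det2 y w ^ 2 * det2 y z ^ 2 := by
      rw [← L1, e1]; ring
    have A2 : ‖z‖ ^ 2 * ‖y‖ ^ 2 * det2 y w ^ 2
        = (inner ℝ z y : ℝ) ^ 2 * det2 y w ^ 2 + det2 y z ^ 2 * det2 y w ^ 2 := by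
      rw [← L2, e2]; ring
    nlinarith [A1, A2, key, hyp]
  calc ‖w‖ * |det2 y z| = Real.sqrt ((‖w‖ * |det2 y z|) ^ 2) :=
        (Real.sqrt_sq (by positivity)).symm
    _ ≤ Real.sqrt ((|det2 y w| * ‖z‖) ^ 2) := Real.sqrt_le_sqrt hfin
    _ = |det2 y w| * ‖z‖ := Real.sqrt_sq (by positivity)

end SideBound

section DpairGeom

variable {Q : Fin N → Pt} {i j0 j1 : Fin N}

lemma aux_seg_param {x : Pt} (hx : x ∈ segment ℝ (Q j0) (Q j1)) :
    ∃ b : ℝ, 0 ≤ b ∧ b ≤ 1 ∧ x - Q j0 = b • (Q j1 - Q j0) := by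
  obtain ⟨a, b, ha, hb, hab, rfl⟩ := hx
  have ha' : a = 1 - b := by linarith
  subst ha'
  exact ⟨b, hb, by linarith, by module⟩

lemma aux_dpair_ge_v (hne : Q j0 ≠ Q j1) :
    |det2 (Q j1 - Q j0) (Q i - Q j0)| / ‖Q j1 - Q j0‖ ≤ Dpair Q i j0 j1 := by
  set y := Q j1 - Q j0 with hy
  have hyne : y ≠ 0 := sub_ne_zero_of_ne (Ne.symm hne)
  have hL : (0:ℝ) < ‖y‖ := norm_pos_iff.mpr hyne
  apply aux_dpair_lower
  intro x hx
  obtain ⟨b, hb0, hb1, hxb⟩ := aux_seg_param hx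
  have hdet : det2 (unitDir (Q j0) (Q j1)) (Q i - x) = ‖y‖⁻¹ * det2 y (Q i - Q j0) := by
    rw [unitDir, ← hy, aux_det2_smul_left]
    congr 1
    have : Q i - x = (Q i - Q j0) - (x - Q j0) := by abel
    rw [this, aux_det2_sub_right, hxb, aux_det2_smul_right, aux_det2_self, mul_zero, sub_zero]
  rw [aux_rot1norm_eq]
  have h2 : |det2 (unitDir (Q j0) (Q j1)) (Q i - x)| = |det2 y (Q i - Q j0)| / ‖y‖ := by
    rw [hdet, abs_mul, abs_inv, abs_norm]
    rw [inv_mul_eq_div]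
  rw [h2]
  have h3 : |det2 y (Q i - Q j0)| / ‖y‖ ≤ |(inner ℝ (Q i - x) (unitDir (Q j0) (Q j1)) : ℝ)| + |det2 y (Q i - Q j0)| / ‖y‖ := by
    linarith [abs_nonneg (inner ℝ (Q i - x) (unitDir (Q j0) (Q j1)) : ℝ)]
  exact h3

lemma aux_dpair_ge_normA (hne : Q j0 ≠ Q j1)
    (hip : (inner ℝ (Q i - Q j0) (Q j1 - Q j0) : ℝ) ≤ 0) :
    ‖Q i - Q j0‖ ≤ Dpair Q i j0 j1 := by
  set y := Q j1 - Q j0 with hy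
  have hyne : y ≠ 0 := sub_ne_zero_of_ne (Ne.symm hne)
  have hL : (0:ℝ) < ‖y‖ := norm_pos_iff.mpr hyne
  have hu : ‖unitDir (Q j0) (Q j1)‖ = 1 := aux_unitDir_norm hne
  apply aux_dpair_lower
  intro x hx
  obtain ⟨b, hb0, hb1, hxb⟩ := aux_seg_param hx
  have hsplit : Q i - x = (Q i - Q j0) - (x - Q j0) := by abel
  have hyy : (inner ℝ y (‖y‖⁻¹ • y) : ℝ) = ‖y‖ := by
    rw [real_inner_smul_right, real_inner_self_eq_norm_sq]
    field_simp
  have hinner : (inner ℝ (Q i - x) (unitDir (Q j0) (Q j1)) : ℝ)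
      = ‖y‖⁻¹ * (inner ℝ (Q i - Q j0) y : ℝ) - b * ‖y‖ := by
    rw [hsplit, inner_sub_left, hxb, unitDir, ← hy]
    rw [real_inner_smul_right, real_inner_smul_left, hyy]
  have hdet : det2 (unitDir (Q j0) (Q j1)) (Q i - x)
      = ‖y‖⁻¹ * det2 y (Q i - Q j0) := by
    rw [unitDir, ← hy, aux_det2_smul_left]
    congr 1
    rw [hsplit, aux_det2_sub_right, hxb, aux_det2_smul_right, aux_det2_self, mul_zero, sub_zero]
  have hbase : ‖Q i - Q j0‖ ≤ rot1norm (unitDir (Q j0) (Q j1)) (Q i - Q j0) :=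
    aux_norm_le_rot1norm _ _ hu
  rw [aux_rot1norm_eq] at hbase ⊢
  have hib : (inner ℝ (Q i - Q j0) (unitDir (Q j0) (Q j1)) : ℝ)
      = ‖y‖⁻¹ * (inner ℝ (Q i - Q j0) y : ℝ) := by
    rw [unitDir, ← hy, real_inner_smul_right]
  have hdb : det2 (unitDir (Q j0) (Q j1)) (Q i - Q j0) = ‖y‖⁻¹ * det2 y (Q i - Q j0) := by
    rw [unitDir, ← hy, aux_det2_smul_left]
  have h1 : |(inner ℝ (Q i - Q j0) (unitDir (Q j0) (Q j1)) : ℝ)|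
      ≤ |(inner ℝ (Q i - x) (unitDir (Q j0) (Q j1)) : ℝ)| := by
    rw [hinner, hib]
    have hq : ‖y‖⁻¹ * (inner ℝ (Q i - Q j0) y : ℝ) ≤ 0 := by
      apply mul_nonpos_of_nonneg_of_nonpos (by positivity) hip
    have hq2 : b * ‖y‖ ≥ 0 := mul_nonneg hb0 hL.le
    rw [abs_of_nonpos hq, abs_of_nonpos (by linarith)]
    linarith
  have h2 : |det2 (unitDir (Q j0) (Q j1)) (Q i - Q j0)|
      = |det2 (unitDir (Q j0) (Q j1)) (Q i - x)| := by rw [hdet, hdb]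
  calc ‖Q i - Q j0‖ ≤ _ := hbase
    _ ≤ _ := by rw [← h2]; linarith [h1, abs_nonneg (det2 (unitDir (Q j0) (Q j1)) (Q i - Q j0))]

lemma aux_dpair_ge_normB (hne : Q j0 ≠ Q j1)
    (hip : 0 ≤ (inner ℝ (Q i - Q j1) (Q j1 - Q j0) : ℝ)) :
    ‖Q i - Q j1‖ ≤ Dpair Q i j0 j1 := by
  set y := Q j1 - Q j0 with hy
  have hyne : y ≠ 0 := sub_ne_zero_of_ne (Ne.symm hne)
  have hL : (0:ℝ) < ‖y‖ := norm_pos_iff.mpr hyne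
  have hu : ‖unitDir (Q j0) (Q j1)‖ = 1 := aux_unitDir_norm hne
  apply aux_dpair_lower
  intro x hx
  obtain ⟨b, hb0, hb1, hxb⟩ := aux_seg_param hx
  have hsplit : Q i - x = (Q i - Q j1) + (1 - b) • y := by
    have : x = Q j0 + b • y := by
      have := hxb; rw [sub_eq_iff_eq_add] at this; rw [this]; abel
    rw [this, hy]
    module
  have hyy : (inner ℝ y (‖y‖⁻¹ • y) : ℝ) = ‖y‖ := by
    rw [real_inner_smul_right, real_inner_self_eq_norm_sq]
    field_simp
  have hinner : (inner ℝ (Q i - x) (unitDir (Q j0) (Q j1)) : ℝ)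
      = ‖y‖⁻¹ * (inner ℝ (Q i - Q j1) y : ℝ) + (1 - b) * ‖y‖ := by
    rw [hsplit, inner_add_left, unitDir, ← hy]
    rw [real_inner_smul_right, real_inner_smul_left, hyy]
  have hdet : det2 (unitDir (Q j0) (Q j1)) (Q i - x)
      = ‖y‖⁻¹ * det2 y (Q i - Q j1) := by
    rw [unitDir, ← hy, aux_det2_smul_left]
    congr 1
    have : det2 y (Q i - x) = det2 y (Q i - Q j1) + (1-b) * det2 y y := by
      rw [hsplit]
      simp only [det2, PiLp.add_apply, PiLp.sub_apply, PiLp.smul_apply, smul_eq_mul]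
      ring
    rw [this, aux_det2_self, mul_zero, add_zero]
  have hbase : ‖Q i - Q j1‖ ≤ rot1norm (unitDir (Q j0) (Q j1)) (Q i - Q j1) :=
    aux_norm_le_rot1norm _ _ hu
  rw [aux_rot1norm_eq] at hbase ⊢
  have hib : (inner ℝ (Q i - Q j1) (unitDir (Q j0) (Q j1)) : ℝ)
      = ‖y‖⁻¹ * (inner ℝ (Q i - Q j1) y : ℝ) := by
    rw [unitDir, ← hy, real_inner_smul_right]
  have hdb : det2 (unitDir (Q j0) (Q j1)) (Q i - Q j1) = ‖y‖⁻¹ * det2 y (Q i - Q j1) := by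
    rw [unitDir, ← hy, aux_det2_smul_left]
  have h1 : |(inner ℝ (Q i - Q j1) (unitDir (Q j0) (Q j1)) : ℝ)|
      ≤ |(inner ℝ (Q i - x) (unitDir (Q j0) (Q j1)) : ℝ)| := by
    rw [hinner, hib]
    have hq : 0 ≤ ‖y‖⁻¹ * (inner ℝ (Q i - Q j1) y : ℝ) := by positivity
    have hq2 : 0 ≤ (1 - b) * ‖y‖ := mul_nonneg (by linarith) hL.le
    rw [abs_of_nonneg hq, abs_of_nonneg (by linarith)]
    linarith
  have h2 : |det2 (unitDir (Q j0) (Q j1)) (Q i - Q j1)|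
      = |det2 (unitDir (Q j0) (Q j1)) (Q i - x)| := by rw [hdet, hdb]
  calc ‖Q i - Q j1‖ ≤ _ := hbase
    _ ≤ _ := by rw [← h2]; linarith [h1]

lemma aux_dpair_ge_infDist (hne : Q j0 ≠ Q j1) :
    Metric.infDist (Q i) (segment ℝ (Q j0) (Q j1)) ≤ Dpair Q i j0 j1 := by
  apply aux_dpair_lower
  intro x hx
  have hu : ‖unitDir (Q j0) (Q j1)‖ = 1 := aux_unitDir_norm hne
  calc Metric.infDist (Q i) (segment ℝ (Q j0) (Q j1)) ≤ dist (Q i) x :=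
        Metric.infDist_le_dist_of_mem hx
    _ = ‖Q i - x‖ := by rw [dist_eq_norm]
    _ ≤ _ := aux_norm_le_rot1norm _ _ hu

end DpairGeom

section OppositeSides

variable {Δ : OrientedComplex N} {Q : Fin N → Pt}

lemma aux_image_triple (Q : Fin N → Pt) (a b c : Fin N) :
    (Q '' ((({a, b, c} : Finset (Fin N))) : Set (Fin N))) = {Q a, Q b, Q c} := by
  simp [Finset.coe_insert, Set.image_insert_eq, Finset.coe_singleton]

lemma aux_image_pair (Q : Fin N → Pt) (a b : Fin N) :
    (Q '' ((({a, b} : Finset (Fin N))) : Set (Fin N))) = {Q a, Q b} := by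
  simp [Finset.coe_insert, Set.image_insert_eq]

lemma aux_card3_distinct {a b c : Fin N} (h : ({a, b, c} : Finset (Fin N)).card = 3) :
    a ≠ b ∧ a ≠ c ∧ b ≠ c := by
  refine ⟨?_, ?_, ?_⟩
  · rintro rfl
    rw [Finset.insert_idem] at h
    have h2 := Finset.card_insert_le a ({c} : Finset (Fin N))
    rw [Finset.card_singleton] at h2
    omega
  · rintro rfl
    have he : ({a, b, a} : Finset (Fin N)) = {a, b} := by
      ext t; simp only [Finset.mem_insert, Finset.mem_singleton]; tauto
    rw [he] at h
    have h2 := Finset.card_insert_le a ({b} : Finset (Fin N))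
    rw [Finset.card_singleton] at h2
    omega
  · rintro rfl
    have he : ({a, b, b} : Finset (Fin N)) = {a, b} := by
      ext t; simp only [Finset.mem_insert, Finset.mem_singleton]; tauto
    rw [he] at h
    have h2 := Finset.card_insert_le a ({b} : Finset (Fin N))
    rw [Finset.card_singleton] at h2
    omega

lemma aux_mem_triple_left (a b c : Fin N) : a ∈ ({a, b, c} : Finset (Fin N)) := by simp
lemma aux_mem_triple_mid (a b c : Fin N) : b ∈ ({a, b, c} : Finset (Fin N)) := by simp
lemma aux_mem_triple_right (a b c : Fin N) : c ∈ ({a, b, c} : Finset (Fin N)) := by simp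

set_option maxHeartbeats 2000000 in
lemma aux_opposite_sides (hQ : Q ∈ Mplus Δ) {x w c1 c2 : Fin N}
    (hσ1 : ({x, w, c1} : Finset (Fin N)) ∈ Δ.faces)
    (hσ2 : ({x, w, c2} : Finset (Fin N)) ∈ Δ.faces)
    (h31 : ({x, w, c1} : Finset (Fin N)).card = 3)
    (h32 : ({x, w, c2} : Finset (Fin N)).card = 3)
    (hne : ({x, w, c1} : Finset (Fin N)) ≠ ({x, w, c2} : Finset (Fin N))) :
    det2 (Q w - Q x) (Q c1 - Q x) * det2 (Q w - Q x) (Q c2 - Q x) < 0 := by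
  obtain ⟨hxw, hxc1, hwc1⟩ := aux_card3_distinct h31
  obtain ⟨-, hxc2, hwc2⟩ := aux_card3_distinct h32
  have hc12 : c1 ≠ c2 := by rintro rfl; exact hne rfl
  set d1 := det2 (Q w - Q x) (Q c1 - Q x) with hd1
  set d2 := det2 (Q w - Q x) (Q c2 - Q x) with hd2
  have habs1 : |d1| = 2 * signedArea Q (Δ.orient {x, w, c1}) :=
    aux_abs_det2_face hQ hσ1 h31 (aux_mem_triple_left x w c1) (aux_mem_triple_mid x w c1)
      (aux_mem_triple_right x w c1) hxw hxc1 hwc1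
  have habs2 : |d2| = 2 * signedArea Q (Δ.orient {x, w, c2}) :=
    aux_abs_det2_face hQ hσ2 h32 (aux_mem_triple_left x w c2) (aux_mem_triple_mid x w c2)
      (aux_mem_triple_right x w c2) hxw hxc2 hwc2
  have hsA1 : 0 < signedArea Q (Δ.orient {x, w, c1}) := hQ.2 _ hσ1 h31
  have hsA2 : 0 < signedArea Q (Δ.orient {x, w, c2}) := hQ.2 _ hσ2 h32
  have hd1ne : d1 ≠ 0 := by
    intro h; rw [h, abs_zero] at habs1; linarith
  have hd2ne : d2 ≠ 0 := by
    intro h; rw [h, abs_zero] at habs2; linarith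
  by_contra hcon
  push_neg at hcon
  have hprod : 0 < d1 * d2 :=
    lt_of_le_of_ne hcon (Ne.symm (mul_ne_zero hd1ne hd2ne))
  -- construct a common point of the two hulls off the segment [Q x, Q w]
  set s₁ : ℝ := det2 (Q c1 - Q x) (Q c2 - Q x) / d2 with hs₁
  set t₁ : ℝ := d1 / d2 with ht₁
  have ht₁pos : 0 < t₁ := by
    rcases mul_pos_iff.mp hprod with ⟨h1, h2⟩ | ⟨h1, h2⟩
    · exact div_pos h1 h2
    · exact div_pos_of_neg_of_neg h1 h2
  have hcram : Q c1 - Q x = s₁ • (Q w - Q x) + t₁ • (Q c2 - Q x) := by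
    have := aux_cramer (e1 := Q w - Q x) (e2 := Q c2 - Q x) hd2ne (Q c1 - Q x)
    rw [this]
  set ε : ℝ := 1 / (4 * (|s₁| + t₁ + 1)) with hε
  have hden : 0 < |s₁| + t₁ + 1 := by positivity
  have hεpos : 0 < ε := by positivity
  have hε4 : ε * |s₁| + ε * t₁ + ε = 1/4 := by
    rw [hε]; field_simp
  have habs_s : -(ε * |s₁|) ≤ ε * s₁ ∧ ε * s₁ ≤ ε * |s₁| := by
    constructor
    · nlinarith [neg_abs_le s₁, hεpos.le]
    · nlinarith [le_abs_self s₁, hεpos.le]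
  set cβ : ℝ := (1 - ε)/2 + ε * s₁ with hcβ
  set cγ : ℝ := ε * t₁ with hcγ
  set cα : ℝ := 1 - cβ - cγ with hcα
  have hεt : 0 ≤ ε * t₁ := mul_nonneg hεpos.le ht₁pos.le
  have hεs : 0 ≤ ε * |s₁| := mul_nonneg hεpos.le (abs_nonneg _)
  have hcβpos : 0 < cβ := by
    rw [hcβ]
    nlinarith [habs_s.1, hε4, hεt]
  have hcγpos : 0 < cγ := mul_pos hεpos ht₁pos
  have hcαpos : 0 < cα := by
    rw [hcα, hcβ, hcγ]
    nlinarith [habs_s.2, hε4, hεs, hεt]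
  set z : Pt := cα • Q x + cβ • Q w + cγ • Q c2 with hz
  have hsum : cα + cβ + cγ = 1 := by rw [hcα]; ring
  have hz2 : z ∈ convexHull ℝ (Q '' ((({x, w, c2} : Finset (Fin N))) : Set (Fin N))) := by
    rw [aux_image_triple]
    exact aux_mem_hull_triple hcαpos.le hcβpos.le hcγpos.le hsum
  have hc1eq : Q c1 = Q x + s₁ • (Q w - Q x) + t₁ • (Q c2 - Q x) := by
    have h := hcram
    rw [sub_eq_iff_eq_add] at h
    rw [h]; abel
  have hzalt : z = ((1 - ε)/2) • Q x + ((1 - ε)/2) • Q w + ε • Q c1 := by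
    rw [hz, hc1eq, hcα, hcβ, hcγ]
    module
  have hz1 : z ∈ convexHull ℝ (Q '' ((({x, w, c1} : Finset (Fin N))) : Set (Fin N))) := by
    rw [aux_image_triple, hzalt]
    exact aux_mem_hull_triple (by nlinarith [hε4, hεs, hεt]) (by nlinarith [hε4, hεs, hεt])
      hεpos.le (by ring)
  obtain ⟨-, -, hint, -⟩ := hQ.1
  obtain ⟨ρ, hρne, hρ1, hρ2, hρeq⟩ := hint _ hσ1 _ hσ2 ⟨z, hz1, hz2⟩
  have hρsub : (Q '' (ρ : Set (Fin N))) ⊆ {Q x, Q w} := by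
    rintro - ⟨t, ht, rfl⟩
    have h1 := hρ1 ht
    have h2 := hρ2 ht
    simp only [Finset.mem_insert, Finset.mem_singleton] at h1 h2
    rcases h1 with rfl | rfl | rfl
    · exact Set.mem_insert _ _
    · exact Set.mem_insert_of_mem _ rfl
    · rcases h2 with h | h | h
      · exact absurd h (Ne.symm hxc1)
      · exact absurd h (Ne.symm hwc1)
      · exact absurd h hc12
  have hzseg : z ∈ segment ℝ (Q x) (Q w) := by
    have hzρ : z ∈ convexHull ℝ (Q '' (ρ : Set (Fin N))) := by
      rw [← hρeq]; exact ⟨hz1, hz2⟩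
    have := convexHull_mono hρsub hzρ
    rwa [convexHull_pair] at this
  obtain ⟨a, b, ha, hb, hab, hzab⟩ := hzseg
  have hdet0 : det2 (Q w - Q x) (z - Q x) = 0 := by
    have hzx : z - Q x = b • (Q w - Q x) := by
      rw [← hzab]
      have ha' : a = 1 - b := by linarith
      rw [ha']
      module
    rw [hzx, aux_det2_smul_right, aux_det2_self, mul_zero]
  have hdetval : det2 (Q w - Q x) (z - Q x) = cγ * d2 := by
    have hzx2 : z - Q x = cβ • (Q w - Q x) + cγ • (Q c2 - Q x) := by
      rw [hz, hcα]
      module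
    rw [hzx2, aux_det2_comb', aux_det2_self, mul_zero, zero_add, hd2]
  rw [hdetval] at hdet0
  exact hd2ne (by
    rcases mul_eq_zero.mp hdet0 with h | h
    · exact absurd h (ne_of_gt hcγpos)
    · exact h)

end OppositeSides

section ConeLemmas

lemma aux_coords_det {P0 P1 P2 ζ : Pt} (hD : det2 (P1 - P0) (P2 - P0) ≠ 0)
    (h : ζ ∈ convexHull ℝ ({P0, P1, P2} : Set Pt)) :
    0 ≤ det2 (ζ - P0) (P2 - P0) / det2 (P1 - P0) (P2 - P0) ∧
    0 ≤ det2 (P1 - P0) (ζ - P0) / det2 (P1 - P0) (P2 - P0) ∧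
    det2 (ζ - P0) (P2 - P0) / det2 (P1 - P0) (P2 - P0)
      + det2 (P1 - P0) (ζ - P0) / det2 (P1 - P0) (P2 - P0) ≤ 1 := by
  obtain ⟨c0, c1, c2, h0, h1, h2, hs, rfl⟩ := aux_coords_of_mem h
  have hv : (c0 • P0 + c1 • P1 + c2 • P2) - P0 = c1 • (P1 - P0) + c2 • (P2 - P0) := by
    have hc0 : c0 = 1 - c1 - c2 := by linarith
    rw [hc0]; module
  have e1 : det2 ((c0 • P0 + c1 • P1 + c2 • P2) - P0) (P2 - P0)
      = c1 * det2 (P1 - P0) (P2 - P0) := by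
    rw [hv, aux_det2_comb, aux_det2_self, mul_zero, add_zero]
  have e2 : det2 (P1 - P0) ((c0 • P0 + c1 • P1 + c2 • P2) - P0)
      = c2 * det2 (P1 - P0) (P2 - P0) := by
    rw [hv, aux_det2_comb', aux_det2_self, mul_zero, zero_add]
  rw [e1, e2, mul_div_assoc, div_self hD, mul_one, mul_div_assoc, div_self hD, mul_one]
  exact ⟨h1, h2, by linarith⟩

lemma aux_mem_of_coords {P0 P1 P2 ζ : Pt} (hD : det2 (P1 - P0) (P2 - P0) ≠ 0)
    (hs : 0 ≤ det2 (ζ - P0) (P2 - P0) / det2 (P1 - P0) (P2 - P0))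
    (ht : 0 ≤ det2 (P1 - P0) (ζ - P0) / det2 (P1 - P0) (P2 - P0))
    (hρb : ‖ζ - P0‖ * ‖P1 - P2‖ < |det2 (P1 - P0) (P2 - P0)|) :
    ζ ∈ convexHull ℝ ({P0, P1, P2} : Set Pt) := by
  set D := det2 (P1 - P0) (P2 - P0) with hDdef
  set s := det2 (ζ - P0) (P2 - P0) / D with hsdef
  set t := det2 (P1 - P0) (ζ - P0) / D with htdef
  have hcram : ζ - P0 = s • (P1 - P0) + t • (P2 - P0) := aux_cramer hD (ζ - P0)
  have hkey : det2 (P1 - P2) (ζ - P0) = (s + t) * D := by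
    rw [hcram, aux_det2_comb']
    have k1 : det2 (P1 - P2) (P1 - P0) = D := by
      rw [hDdef]; simp only [det2, PiLp.sub_apply]; ring
    have k2 : det2 (P1 - P2) (P2 - P0) = D := by
      rw [hDdef]; simp only [det2, PiLp.sub_apply]; ring
    rw [k1, k2]; ring
  have hst : s + t ≤ 1 := by
    have habs : |det2 (P1 - P2) (ζ - P0)| ≤ ‖P1 - P2‖ * ‖ζ - P0‖ := aux_abs_det2_le _ _
    rw [hkey, abs_mul] at habs
    have hDpos : 0 < |D| := abs_pos.mpr hD
    nlinarith [le_abs_self (s + t), habs, hρb]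
  have hmem := aux_mem_hull_triple (P0 := P0) (P1 := P1) (P2 := P2)
    (c0 := 1 - s - t) (c1 := s) (c2 := t) (by linarith) hs ht (by ring)
  have hzeq : (1 - s - t) • P0 + s • P1 + t • P2 = ζ := by
    have h := hcram
    rw [sub_eq_iff_eq_add] at h
    rw [h]
    module
  rwa [hzeq] at hmem

lemma aux_cont_detmul (O v : Pt) (K : ℝ) :
    Continuous fun ζ : Pt => det2 (ζ - O) v * K := by
  simp only [det2, PiLp.sub_apply]
  fun_prop

lemma aux_cont_detmul' (v O : Pt) (K : ℝ) :
    Continuous fun ζ : Pt => det2 v (ζ - O) * K := by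
  simp only [det2, PiLp.sub_apply]
  fun_prop

lemma aux_div_nonneg_iff_mul {x D : ℝ} (hD : D ≠ 0) : 0 ≤ x / D ↔ 0 ≤ x * D := by
  constructor
  · intro h
    have : x / D * D ^ 2 = x * D := by field_simp
    rw [← this]
    positivity
  · intro h
    have : x / D = x * D / D ^ 2 := by field_simp
    rw [this]
    positivity

end ConeLemmas

section StarCover

lemma aux_face_enum1 {σ : Finset (Fin N)} (h3 : σ.card = 3) {a : Fin N} (ha : a ∈ σ) :
    ∃ b c : Fin N, σ = {a, b, c} := by
  have hlt : 1 < σ.card := by omega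
  obtain ⟨b, hbσ, hba⟩ := Finset.exists_mem_ne hlt a
  obtain ⟨c, _, _, _, heq⟩ := aux_face_third h3 ha hbσ (Ne.symm hba)
  exact ⟨b, c, heq⟩

lemma aux_pair_swap (a b c : Fin N) : ({a, c, b} : Finset (Fin N)) = {a, b, c} := by
  ext t; simp only [Finset.mem_insert, Finset.mem_singleton]; tauto

set_option maxHeartbeats 2000000 in
lemma aux_starCover (Δ : OrientedComplex N) (Q : Fin N → Pt) (hQ : Q ∈ Mplus Δ)
    (a : Fin N) (haf : ({a} : Finset (Fin N)) ∈ Δ.faces)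
    (hnb : ∀ e ∈ boundaryEdges Δ, a ∉ e)
    (ρ : ℝ) (hρ : 0 < ρ)
    (hsmall : ∀ b c : Fin N, ({a, b, c} : Finset (Fin N)) ∈ Δ.faces →
        ({a, b, c} : Finset (Fin N)).card = 3 →
        ρ * ‖Q b - Q c‖ < |det2 (Q b - Q a) (Q c - Q a)|)
    (p : Pt) (hp : ‖p - Q a‖ = ρ) :
    ∃ σ ∈ Δ.faces, σ.card = 3 ∧ a ∈ σ ∧ p ∈ convexHull ℝ (Q '' (σ : Set (Fin N))) := by
  classical
  set O := Q a with hO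
  have hDne : ∀ b c : Fin N, ({a, b, c} : Finset (Fin N)) ∈ Δ.faces →
      ({a, b, c} : Finset (Fin N)).card = 3 → det2 (Q b - O) (Q c - O) ≠ 0 := by
    intro b c hf h3 h0
    have h1 := hsmall b c hf h3
    rw [h0, abs_zero] at h1
    nlinarith [norm_nonneg (Q b - Q c), hρ]
  set U : Set Pt := ⋃ σ ∈ ((Δ.faces.filter (fun σ => σ.card = 3 ∧ a ∈ σ)) : Set (Finset (Fin N))),
      convexHull ℝ (Q '' (σ : Set (Fin N))) with hUdef
  have hsubU : ∀ b c : Fin N, ({a, b, c} : Finset (Fin N)) ∈ Δ.faces →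
      ({a, b, c} : Finset (Fin N)).card = 3 →
      convexHull ℝ (Q '' ((({a, b, c} : Finset (Fin N))) : Set (Fin N))) ⊆ U := by
    intro b c hf h3
    rw [hUdef]
    exact Set.subset_biUnion_of_mem
      (u := fun σ : Finset (Fin N) => convexHull ℝ (Q '' (σ : Set (Fin N))))
      (Finset.mem_coe.mpr (Finset.mem_filter.mpr ⟨hf, h3, by simp⟩))
  have hmemIf : ∀ b c : Fin N, ({a, b, c} : Finset (Fin N)) ∈ Δ.faces →
      ({a, b, c} : Finset (Fin N)).card = 3 → ∀ ζ : Pt, ‖ζ - O‖ = ρ →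
      0 ≤ det2 (ζ - O) (Q c - O) * det2 (Q b - O) (Q c - O) →
      0 ≤ det2 (Q b - O) (ζ - O) * det2 (Q b - O) (Q c - O) →
      ζ ∈ convexHull ℝ (Q '' ((({a, b, c} : Finset (Fin N))) : Set (Fin N))) := by
    intro b c hf h3 ζ hζ hs ht
    rw [aux_image_triple]
    have hD := hDne b c hf h3
    refine aux_mem_of_coords hD ((aux_div_nonneg_iff_mul hD).mpr hs)
      ((aux_div_nonneg_iff_mul hD).mpr ht) ?_
    rw [hζ]
    exact hsmall b c hf h3
  have hcoords : ∀ b c : Fin N, ({a, b, c} : Finset (Fin N)) ∈ Δ.faces →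
      ({a, b, c} : Finset (Fin N)).card = 3 → ∀ ζ : Pt,
      ζ ∈ convexHull ℝ (Q '' ((({a, b, c} : Finset (Fin N))) : Set (Fin N))) →
      0 ≤ det2 (ζ - O) (Q c - O) * det2 (Q b - O) (Q c - O) ∧
      0 ≤ det2 (Q b - O) (ζ - O) * det2 (Q b - O) (Q c - O) := by
    intro b c hf h3 ζ hζ
    rw [aux_image_triple] at hζ
    have hD := hDne b c hf h3
    obtain ⟨h1, h2, -⟩ := aux_coords_det hD hζ
    exact ⟨(aux_div_nonneg_iff_mul hD).mp h1, (aux_div_nonneg_iff_mul hD).mp h2⟩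
  have hneigh : ∀ b c : Fin N, ({a, b, c} : Finset (Fin N)) ∈ Δ.faces →
      ({a, b, c} : Finset (Fin N)).card = 3 →
      ∃ c' : Fin N, ({a, b, c'} : Finset (Fin N)) ∈ Δ.faces ∧
        ({a, b, c'} : Finset (Fin N)).card = 3 ∧
        det2 (Q b - O) (Q c' - O) * det2 (Q b - O) (Q c - O) < 0 := by
    intro b c hf h3
    obtain ⟨hab, hac, hbc⟩ := aux_card3_distinct h3
    have hesub : ({a, b} : Finset (Fin N)) ⊆ ({a, b, c} : Finset (Fin N)) := by
      intro t ht
      simp only [Finset.mem_insert, Finset.mem_singleton] at ht ⊢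
      tauto
    have hef : ({a, b} : Finset (Fin N)) ∈ Δ.faces :=
      Δ.toConnectivityComplex.down_closed _ hf _ hesub ⟨a, by simp⟩
    have hecard : ({a, b} : Finset (Fin N)).card = 2 := Finset.card_pair hab
    have henb : ({a, b} : Finset (Fin N)) ∉ boundaryEdges Δ := by
      intro h
      exact hnb _ h (by simp)
    have hFmem : ({a, b, c} : Finset (Fin N)) ∈ Δ.faces.filter
        (fun τ => τ.card = 3 ∧ ({a, b} : Finset (Fin N)) ⊆ τ) :=
      Finset.mem_filter.mpr ⟨hf, h3, hesub⟩
    have hFcard : (Δ.faces.filter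
        (fun τ => τ.card = 3 ∧ ({a, b} : Finset (Fin N)) ⊆ τ)).card ≠ 1 := by
      intro h
      refine henb ?_
      rw [boundaryEdges, Finset.mem_filter]
      exact ⟨hef, hecard, h⟩
    have hFlt : 1 < (Δ.faces.filter
        (fun τ => τ.card = 3 ∧ ({a, b} : Finset (Fin N)) ⊆ τ)).card := by
      have h1 : 0 < (Δ.faces.filter
          (fun τ => τ.card = 3 ∧ ({a, b} : Finset (Fin N)) ⊆ τ)).card :=
        Finset.card_pos.mpr ⟨_, hFmem⟩
      omega
    obtain ⟨τ, hτF, hτne⟩ := Finset.exists_mem_ne hFlt ({a, b, c})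
    obtain ⟨hτf, hτ3, hτsub⟩ := Finset.mem_filter.mp hτF
    have haτ : a ∈ τ := hτsub (by simp)
    have hbτ : b ∈ τ := hτsub (by simp)
    obtain ⟨c', hc'τ, hc'a, hc'b, hτeq⟩ := aux_face_third hτ3 haτ hbτ hab
    have hneq : ({a, b, c'} : Finset (Fin N)) ≠ ({a, b, c} : Finset (Fin N)) := by
      rw [← hτeq]; exact hτne
    have hopp := aux_opposite_sides hQ (x := a) (w := b) (c1 := c') (c2 := c)
      (hτeq ▸ hτf) hf (hτeq ▸ hτ3) h3 hneq
    exact ⟨c', hτeq ▸ hτf, hτeq ▸ hτ3, hopp⟩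
  have hcaseB : ∀ b c : Fin N, ({a, b, c} : Finset (Fin N)) ∈ Δ.faces →
      ({a, b, c} : Finset (Fin N)).card = 3 →
      ∀ z : Pt, ‖z - O‖ = ρ →
      0 < det2 (z - O) (Q c - O) * det2 (Q b - O) (Q c - O) →
      det2 (Q b - O) (z - O) = 0 →
      ∃ V : Set Pt, IsOpen V ∧ z ∈ V ∧ ∀ ζ ∈ V, ‖ζ - O‖ = ρ → ζ ∈ U := by
    intro b c hf h3 z hz hspos ht0
    obtain ⟨c', hf', h3', hopp⟩ := hneigh b c hf h3
    have hDne0 : det2 (Q b - O) (Q c - O) ≠ 0 := hDne b c hf h3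
    have hD'ne0 : det2 (Q b - O) (Q c' - O) ≠ 0 := hDne b c' hf' h3'
    have hcram := aux_cramer (e1 := Q b - O) (e2 := Q c - O) hDne0 (z - O)
    rw [ht0, zero_div, zero_smul, add_zero] at hcram
    have hs' : 0 < det2 (z - O) (Q c - O) / det2 (Q b - O) (Q c - O) := by
      rcases mul_pos_iff.mp hspos with ⟨h1, h2⟩ | ⟨h1, h2⟩
      · exact div_pos h1 h2
      · exact div_pos_of_neg_of_neg h1 h2
    have hzc' : 0 < det2 (z - O) (Q c' - O) * det2 (Q b - O) (Q c' - O) := by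
      rw [hcram, aux_det2_smul_left]
      have hsq : 0 < det2 (Q b - O) (Q c' - O) ^ 2 :=
        lt_of_le_of_ne (sq_nonneg _) (Ne.symm (pow_ne_zero 2 hD'ne0))
      nlinarith [hs', hsq]
    refine ⟨{ζ | 0 < det2 (ζ - O) (Q c - O) * det2 (Q b - O) (Q c - O)}
      ∩ {ζ | 0 < det2 (ζ - O) (Q c' - O) * det2 (Q b - O) (Q c' - O)}, ?_, ⟨hspos, hzc'⟩, ?_⟩
    · exact (isOpen_lt continuous_const (aux_cont_detmul O (Q c - O) _)).inter
        (isOpen_lt continuous_const (aux_cont_detmul O (Q c' - O) _))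
    · rintro ζ ⟨hζ1, hζ2⟩ hζS
      by_cases hsign : 0 ≤ det2 (Q b - O) (ζ - O) * det2 (Q b - O) (Q c - O)
      · exact hsubU b c hf h3 (hmemIf b c hf h3 ζ hζS hζ1.le hsign)
      · push_neg at hsign
        have hsq : 0 < det2 (Q b - O) (Q c - O) ^ 2 :=
          lt_of_le_of_ne (sq_nonneg _) (Ne.symm (pow_ne_zero 2 hDne0))
        have ht' : 0 ≤ det2 (Q b - O) (ζ - O) * det2 (Q b - O) (Q c' - O) := by
          nlinarith [mul_pos_of_neg_of_neg hsign hopp, hsq]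
        exact hsubU b c' hf' h3' (hmemIf b c' hf' h3' ζ hζS hζ2.le ht')
  -- topology
  set S := Metric.sphere O ρ with hSdef
  have hpS : p ∈ S := by
    rw [hSdef, Metric.mem_sphere, dist_eq_norm]
    exact hp
  have hUclosed : IsClosed U := by
    rw [hUdef]
    apply Set.Finite.isClosed_biUnion (Finset.finite_toSet _)
    intro σ hσ
    exact (Set.Finite.isCompact_convexHull ℝ ((σ.finite_toSet).image Q)).isClosed
  have hrank : (1 : Cardinal) < Module.rank ℝ Pt := by
    rw [← Module.finrank_eq_rank]
    norm_num [finrank_euclideanSpace_fin]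
  have hconn : IsPreconnected S := (isConnected_sphere hrank O hρ.le).isPreconnected
  haveI : PreconnectedSpace S := Subtype.preconnectedSpace hconn
  set T : Set S := Subtype.val ⁻¹' U with hTdef
  have hTclosed : IsClosed T := hUclosed.preimage continuous_subtype_val
  have hTopen : IsOpen T := by
    rw [isOpen_iff_mem_nhds]
    rintro ⟨z, hzS⟩ hzT
    have hzU : z ∈ U := hzT
    have hzρ : ‖z - O‖ = ρ := by
      rw [← dist_eq_norm]
      rw [hSdef] at hzS
      exact Metric.mem_sphere.mp hzS
    rw [hUdef] at hzU
    simp only [Set.mem_iUnion, exists_prop] at hzU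
    obtain ⟨σ, hσmem, hzhull⟩ := hzU
    obtain ⟨hσf, hσ3, haσ⟩ := Finset.mem_filter.mp (Finset.mem_coe.mp hσmem)
    obtain ⟨b, c, hσeq⟩ := aux_face_enum1 hσ3 haσ
    rw [hσeq] at hzhull
    have hf : ({a, b, c} : Finset (Fin N)) ∈ Δ.faces := hσeq ▸ hσf
    have h3 : ({a, b, c} : Finset (Fin N)).card = 3 := hσeq ▸ hσ3
    have hDne0 : det2 (Q b - O) (Q c - O) ≠ 0 := hDne b c hf h3
    obtain ⟨hs0, ht0⟩ := hcoords b c hf h3 z hzhull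
    have hnb0 : det2 (z - O) (Q c - O) ≠ 0 ∨ det2 (Q b - O) (z - O) ≠ 0 := by
      by_contra hcon
      push_neg at hcon
      have hcram := aux_cramer (e1 := Q b - O) (e2 := Q c - O) hDne0 (z - O)
      rw [hcon.1, hcon.2, zero_div, zero_smul, zero_smul, add_zero] at hcram
      rw [hcram, norm_zero] at hzρ
      exact absurd hzρ.symm (ne_of_gt hρ)
    have hVex : ∃ V : Set Pt, IsOpen V ∧ z ∈ V ∧ ∀ ζ ∈ V, ‖ζ - O‖ = ρ → ζ ∈ U := by
      by_cases hteq : det2 (Q b - O) (z - O) = 0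
      · have hsne : det2 (z - O) (Q c - O) ≠ 0 := by tauto
        have hspos : 0 < det2 (z - O) (Q c - O) * det2 (Q b - O) (Q c - O) :=
          lt_of_le_of_ne hs0 (Ne.symm (mul_ne_zero hsne hDne0))
        exact hcaseB b c hf h3 z hzρ hspos hteq
      · by_cases hseq : det2 (z - O) (Q c - O) = 0
        · have hf2 : ({a, c, b} : Finset (Fin N)) ∈ Δ.faces := by
            rw [aux_pair_swap]; exact hf
          have h32 : ({a, c, b} : Finset (Fin N)).card = 3 := by
            rw [aux_pair_swap]; exact h3
          have htpos : 0 < det2 (z - O) (Q b - O) * det2 (Q c - O) (Q b - O) := by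
            have hswap1 : det2 (z - O) (Q b - O) * det2 (Q c - O) (Q b - O)
                = det2 (Q b - O) (z - O) * det2 (Q b - O) (Q c - O) := by
              rw [aux_det2_swap (z - O) (Q b - O), aux_det2_swap (Q c - O) (Q b - O)]
              ring
            rw [hswap1]
            exact lt_of_le_of_ne ht0 (Ne.symm (mul_ne_zero hteq hDne0))
          have hz0 : det2 (Q c - O) (z - O) = 0 := by
            rw [aux_det2_swap (Q c - O) (z - O), hseq, neg_zero]
          exact hcaseB c b hf2 h32 z hzρ htpos hz0
        · have hs' : 0 < det2 (z - O) (Q c - O) * det2 (Q b - O) (Q c - O) :=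
            lt_of_le_of_ne hs0 (Ne.symm (mul_ne_zero hseq hDne0))
          have ht' : 0 < det2 (Q b - O) (z - O) * det2 (Q b - O) (Q c - O) :=
            lt_of_le_of_ne ht0 (Ne.symm (mul_ne_zero hteq hDne0))
          refine ⟨{ζ | 0 < det2 (ζ - O) (Q c - O) * det2 (Q b - O) (Q c - O)}
            ∩ {ζ | 0 < det2 (Q b - O) (ζ - O) * det2 (Q b - O) (Q c - O)},
            ?_, ⟨hs', ht'⟩, ?_⟩
          · exact (isOpen_lt continuous_const (aux_cont_detmul O (Q c - O) _)).inter
              (isOpen_lt continuous_const (aux_cont_detmul' (Q b - O) O _))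
          · rintro ζ ⟨h1, h2⟩ hζS
            exact hsubU b c hf h3 (hmemIf b c hf h3 ζ hζS h1.le h2.le)
    obtain ⟨V, hVopen, hzV, hVsub⟩ := hVex
    refine Filter.mem_of_superset ((hVopen.preimage continuous_subtype_val).mem_nhds hzV) ?_
    rintro ⟨ζ, hζS⟩ hζV
    refine hVsub ζ hζV ?_
    rw [← dist_eq_norm]
    rw [hSdef] at hζS
    exact Metric.mem_sphere.mp hζS
  have hTne : T.Nonempty := by
    obtain ⟨τ0, hτ0f, hτ03, hτ0sub⟩ := Δ.toConnectivityComplex.pure {a} haf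
    have haτ0 : a ∈ τ0 := hτ0sub (Finset.mem_singleton_self a)
    obtain ⟨b, c, hτeq⟩ := aux_face_enum1 hτ03 haτ0
    have hf : ({a, b, c} : Finset (Fin N)) ∈ Δ.faces := hτeq ▸ hτ0f
    have h3 : ({a, b, c} : Finset (Fin N)).card = 3 := hτeq ▸ hτ03
    obtain ⟨hab, hac, hbc⟩ := aux_card3_distinct h3
    have hQab : Q b ≠ O :=
      Ne.symm (aux_face_ne hQ hf h3 (aux_mem_triple_left a b c) (aux_mem_triple_mid a b c) hab)
    have hL : 0 < ‖Q b - O‖ := norm_pos_iff.mpr (sub_ne_zero_of_ne hQab)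
    have hQbc : Q b ≠ Q c :=
      aux_face_ne hQ hf h3 (aux_mem_triple_mid a b c) (aux_mem_triple_right a b c) hbc
    have hbcn : 0 < ‖Q b - Q c‖ := norm_pos_iff.mpr (sub_ne_zero_of_ne hQbc)
    have hρL : ρ < ‖Q b - O‖ := by
      have h1 := hsmall b c hf h3
      have h2 : |det2 (Q b - O) (Q c - O)| ≤ ‖Q b - O‖ * ‖Q c - Q b‖ := by
        have hrw : det2 (Q b - O) (Q c - O) = det2 (Q b - O) (Q c - Q b) := by
          simp only [det2, PiLp.sub_apply]; ring
        rw [hrw]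
        exact aux_abs_det2_le _ _
      have h3n : ‖Q c - Q b‖ = ‖Q b - Q c‖ := norm_sub_rev _ _
      rw [h3n] at h2
      nlinarith [h1, h2, hbcn, hL]
    set μ := ρ / ‖Q b - O‖ with hμ
    have hμ0 : 0 ≤ μ := by positivity
    have hμ1 : μ ≤ 1 := by
      rw [hμ, div_le_one hL]
      linarith
    set z0 : Pt := (1 - μ) • O + μ • Q b + (0:ℝ) • Q c with hz0
    have hz0S : ‖z0 - O‖ = ρ := by
      have hd : z0 - O = μ • (Q b - O) := by rw [hz0]; module
      rw [hd, norm_smul, Real.norm_eq_abs, abs_of_nonneg hμ0, hμ]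
      field_simp
    have hz0U : z0 ∈ U := by
      apply hsubU b c hf h3
      rw [aux_image_triple, hz0]
      exact aux_mem_hull_triple (by linarith) hμ0 le_rfl (by ring)
    exact ⟨⟨z0, by rw [hSdef, Metric.mem_sphere, dist_eq_norm]; exact hz0S⟩, hz0U⟩
  have hTuniv : T = Set.univ := by
    rcases isClopen_iff.mp ⟨hTclosed, hTopen⟩ with h | h
    · rw [h] at hTne
      simp at hTne
    · exact h
  have hpU : p ∈ U := by
    have hmem : (⟨p, hpS⟩ : S) ∈ T := by rw [hTuniv]; trivial
    exact hmem
  rw [hUdef] at hpU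
  simp only [Set.mem_iUnion, exists_prop] at hpU
  obtain ⟨σ, hσmem, hmem⟩ := hpU
  obtain ⟨hσf, hσ3, haσ⟩ := Finset.mem_filter.mp (Finset.mem_coe.mp hσmem)
  exact ⟨σ, hσf, hσ3, haσ, hmem⟩

end StarCover

section VertexBound

lemma aux_fin3_other : ∀ x y : Fin 3, x ≠ y → y = x + 1 ∨ y = x + 2 := by decide
lemma aux_fin3_add_one_ne : ∀ ℓ : Fin 3, (ℓ+1 : Fin 3) ≠ ℓ := by decide
lemma aux_fin3_add_two_ne : ∀ ℓ : Fin 3, (ℓ+2 : Fin 3) ≠ ℓ := by decide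

set_option maxHeartbeats 2000000 in
lemma aux_vertex_bound (Δ : OrientedComplex N) (Qref Q : Fin N → Pt) (hQ : Q ∈ Mplus Δ)
    {β1 β2 β3 : ℝ} (hβ1 : 0 < β1) (hβ2 : 0 < β2) (hβ3 : 0 ≤ β3)
    (hf : 0 < ffun Δ Qref β1 β2 β3 Q)
    {i0 a : Fin N} (hv : ({i0} : Finset (Fin N)) ∈ Δ.faces)
    (hav : ({a} : Finset (Fin N)) ∈ Δ.faces)
    (hbv : i0 ∈ boundaryVertices Δ)
    (hne : Q i0 ≠ Q a) :
    min β1 β2 / (Real.sqrt 2 * ffun Δ Qref β1 β2 β3 Q) ≤ ‖Q i0 - Q a‖ := by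
  classical
  have hs2 : (1:ℝ) ≤ Real.sqrt 2 := by
    rw [show (1:ℝ) = Real.sqrt 1 by rw [Real.sqrt_one]]
    exact Real.sqrt_le_sqrt (by norm_num)
  have hs2pos : (0:ℝ) < Real.sqrt 2 := by linarith
  set f := ffun Δ Qref β1 β2 β3 Q with hfdef
  have hred1 : min β1 β2 / (Real.sqrt 2 * f) ≤ β1 / f := by
    rw [div_le_div_iff₀ (by positivity) hf]
    have c1 : min β1 β2 * f ≤ β1 * f := mul_le_mul_of_nonneg_right (min_le_left _ _) hf.le
    have c2 : β1 * f ≤ β1 * (Real.sqrt 2 * f) :=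
      mul_le_mul_of_nonneg_left (by nlinarith) hβ1.le
    linarith
  have hred2 : min β1 β2 / (Real.sqrt 2 * f) ≤ β2 / (Real.sqrt 2 * f) := by
    have hd : (0:ℝ) < Real.sqrt 2 * f := by positivity
    exact (div_le_div_iff_of_pos_right hd).mpr (min_le_right β1 β2)
  by_cases hface : ({i0, a} : Finset (Fin N)) ∈ Δ.faces
  · -- Case (a): i0 and a joined by an edge
    obtain ⟨τ, hτf, hτ3, hτsub⟩ := Δ.toConnectivityComplex.pure _ hface
    have hi0τ : i0 ∈ τ := hτsub (by simp)
    have haτ : a ∈ τ := hτsub (by simp)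
    have hia : i0 ≠ a := fun h => hne (by rw [h])
    obtain ⟨ℓ, hℓ⟩ := aux_orient_surj hτf hτ3 hi0τ
    obtain ⟨ℓ', hℓ'⟩ := aux_orient_surj hτf hτ3 haτ
    have hℓne : ℓ ≠ ℓ' := fun h => hia (by rw [← hℓ, ← hℓ', h])
    have hcases := aux_fin3_other ℓ ℓ' hℓne
    set o := Δ.orient τ with ho
    have hh := aux_height_pos hQ hτf hτ3 ℓ
    have hEpos := aux_edgeLen_pos hQ hτf hτ3 ℓ
    have hrot := aux_signedArea_rot Q o ℓ
    have hkey : height Q o ℓ ≤ ‖Q i0 - Q a‖ := by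
      rw [height, div_le_iff₀ hEpos]
      rcases hcases with hcc | hcc
      · have ha1 : Q (o (ℓ+1)) = Q a := by rw [← hℓ', hcc]
        have hE : edgeLen Q o ℓ = ‖Q (o (ℓ+2)) - Q (o (ℓ+1))‖ := by
          rw [edgeLen, norm_sub_rev]
        have hN : ‖Q (o (ℓ+1)) - Q (o ℓ)‖ = ‖Q i0 - Q a‖ := by
          rw [ha1, hℓ, norm_sub_rev]
        calc 2 * signedArea Q o
            = det2 (Q (o (ℓ+1)) - Q (o ℓ)) (Q (o (ℓ+2)) - Q (o (ℓ+1))) := hrot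
          _ ≤ |det2 (Q (o (ℓ+1)) - Q (o ℓ)) (Q (o (ℓ+2)) - Q (o (ℓ+1)))| := le_abs_self _
          _ ≤ ‖Q (o (ℓ+1)) - Q (o ℓ)‖ * ‖Q (o (ℓ+2)) - Q (o (ℓ+1))‖ := aux_abs_det2_le _ _
          _ = ‖Q i0 - Q a‖ * edgeLen Q o ℓ := by rw [hN, hE]
      · have ha2 : Q (o (ℓ+2)) = Q a := by rw [← hℓ', hcc]
        have halt : det2 (Q (o (ℓ+1)) - Q (o ℓ)) (Q (o (ℓ+2)) - Q (o (ℓ+1)))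
            = det2 (Q (o (ℓ+2)) - Q (o ℓ)) (Q (o (ℓ+2)) - Q (o (ℓ+1))) := by
          simp only [det2, PiLp.sub_apply]; ring
        have hE : edgeLen Q o ℓ = ‖Q (o (ℓ+2)) - Q (o (ℓ+1))‖ := by
          rw [edgeLen, norm_sub_rev]
        have hN : ‖Q (o (ℓ+2)) - Q (o ℓ)‖ = ‖Q i0 - Q a‖ := by
          rw [ha2, hℓ, norm_sub_rev]
        calc 2 * signedArea Q o
            = det2 (Q (o (ℓ+2)) - Q (o ℓ)) (Q (o (ℓ+2)) - Q (o (ℓ+1))) := by rw [hrot, halt]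
          _ ≤ |det2 (Q (o (ℓ+2)) - Q (o ℓ)) (Q (o (ℓ+2)) - Q (o (ℓ+1)))| := le_abs_self _
          _ ≤ ‖Q (o (ℓ+2)) - Q (o ℓ)‖ * ‖Q (o (ℓ+2)) - Q (o (ℓ+1))‖ := aux_abs_det2_le _ _
          _ = ‖Q i0 - Q a‖ * edgeLen Q o ℓ := by rw [hN, hE]
    have hff : β1 / height Q o ℓ ≤ f :=
      aux_ffun_ge_height (Qref := Qref) hβ1.le hβ2.le hβ3 hQ hτf hτ3 ℓ
    have hdiv : β1 / f ≤ height Q o ℓ := aux_div_f_le_height hβ1 hf hh hff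
    linarith
  · by_cases habv : a ∈ boundaryVertices Δ
    · -- Case (b): a is a boundary vertex; use a boundary edge at a
      rw [boundaryVertices, Finset.mem_filter] at habv
      obtain ⟨-, e', he'b, hae'⟩ := habv
      have he'face : e' ∈ Δ.faces := (Finset.mem_filter.mp he'b).1
      have he'2 : e'.card = 2 := ((Finset.mem_filter.mp he'b).2).1
      have hi0a : i0 ≠ a := fun h => hne (by rw [h])
      have hi0e' : i0 ∉ e' := by
        intro hmem
        have hsub : ({i0, a} : Finset (Fin N)) ⊆ e' := by
          intro t ht
          simp only [Finset.mem_insert, Finset.mem_singleton] at ht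
          rcases ht with rfl | rfl <;> assumption
        have he'' : ({i0, a} : Finset (Fin N)) = e' :=
          Finset.eq_of_subset_of_card_le hsub (by rw [Finset.card_pair hi0a, he'2])
        exact hface (he'' ▸ he'face)
      obtain ⟨m, hme', hma⟩ := Finset.exists_mem_ne (by omega : 1 < e'.card) a
      obtain ⟨τ, hτf, hτ3, hτsub⟩ := Δ.toConnectivityComplex.pure e' he'face
      have hQam : Q a ≠ Q m := aux_face_ne hQ hτf hτ3 (hτsub hae') (hτsub hme') (Ne.symm hma)
      have hhull : Q i0 ∉ convexHull ℝ (Q '' (e' : Set (Fin N))) :=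
        aux_not_mem_hull hQ.1 he'face hv hi0e'
      have he'am : e' = ({a, m} : Finset (Fin N)) := by
        symm
        apply Finset.eq_of_subset_of_card_le
        · intro t ht
          simp only [Finset.mem_insert, Finset.mem_singleton] at ht
          rcases ht with rfl | rfl <;> assumption
        · rw [he'2, Finset.card_pair (Ne.symm hma)]
      rw [he'am, aux_image_pair, convexHull_pair] at hhull
      have hseg_closed : IsClosed (segment ℝ (Q a) (Q m)) := by
        have hcl : IsClosed (convexHull ℝ ({Q a, Q m} : Set Pt)) :=
          (Set.Finite.isCompact_convexHull
            ℝ ((Set.finite_singleton (Q m)).insert (Q a))).isClosed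
        rwa [convexHull_pair] at hcl
      have hinf : 0 < Metric.infDist (Q i0) (segment ℝ (Q a) (Q m)) :=
        (hseg_closed.notMem_iff_infDist_pos ⟨Q a, left_mem_segment ℝ _ _⟩).mp hhull
      have hDedge_lb : Metric.infDist (Q i0) (segment ℝ (Q a) (Q m)) ≤ Dedge Q i0 e' := by
        apply aux_dedge_lower
        · exact ⟨a, hae', m, hme', Ne.symm hma⟩
        · intro x hx y hy' hxy
          rw [he'am] at hx hy'
          simp only [Finset.mem_insert, Finset.mem_singleton] at hx hy'
          rcases hx with hx1 | hx1 <;> rcases hy' with hy1 | hy1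
          · exact absurd (hx1.trans hy1.symm) hxy
          · rw [hx1, hy1]
            exact aux_dpair_ge_infDist hQam
          · rw [hx1, hy1]
            have h := aux_dpair_ge_infDist (Q := Q) (i := i0) (j0 := m) (j1 := a) (Ne.symm hQam)
            rwa [segment_symm] at h
          · exact absurd (hx1.trans hy1.symm) hxy
      have hDedge_pos : 0 < Dedge Q i0 e' := lt_of_lt_of_le hinf hDedge_lb
      have hff : β2 / Dedge Q i0 e' ≤ f :=
        aux_ffun_ge_dedge (Qref := Qref) (β1 := β1) (β3 := β3) hβ1.le hβ2.le hβ3 hQ he'b hbv hi0e'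
      have hDedge_le : Dedge Q i0 e' ≤ Real.sqrt 2 * ‖Q i0 - Q a‖ := by
        have h1 : Dedge Q i0 e' ≤ Dpair Q i0 a m := aux_dedge_le hae' hme' (Ne.symm hma)
        have h2 : Dpair Q i0 a m ≤ rot1norm (unitDir (Q a) (Q m)) (Q i0 - Q a) :=
          aux_dpair_le (Q a) (left_mem_segment ℝ _ _)
        have h3 : rot1norm (unitDir (Q a) (Q m)) (Q i0 - Q a) ≤ Real.sqrt 2 * ‖Q i0 - Q a‖ :=
          aux_rot1norm_le _ _ (aux_unitDir_norm hQam)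
        linarith
      have hβ2f : β2 ≤ f * (Real.sqrt 2 * ‖Q i0 - Q a‖) := by
        have hb := (div_le_iff₀ hDedge_pos).mp hff
        nlinarith [hDedge_le, hf]
      calc min β1 β2 / (Real.sqrt 2 * f) ≤ β2 / (Real.sqrt 2 * f) := hred2
        _ ≤ ‖Q i0 - Q a‖ := by
            rw [div_le_iff₀ (by positivity)]
            nlinarith [hβ2f]
    · -- Case (c): a is an interior vertex; use the star covering
      have hnb : ∀ e ∈ boundaryEdges Δ, a ∉ e := by
        intro e heb hae
        apply habv
        rw [boundaryVertices, Finset.mem_filter]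
        exact ⟨Finset.mem_univ a, e, heb, hae⟩
      by_contra hcon
      push_neg at hcon
      set ρ := ‖Q i0 - Q a‖ with hρdef
      have hρpos : 0 < ρ := norm_pos_iff.mpr (sub_ne_zero_of_ne hne)
      have hsmall : ∀ b c : Fin N, ({a, b, c} : Finset (Fin N)) ∈ Δ.faces →
          ({a, b, c} : Finset (Fin N)).card = 3 →
          ρ * ‖Q b - Q c‖ < |det2 (Q b - Q a) (Q c - Q a)| := by
        intro b c hfbc h3bc
        obtain ⟨hab', hac', hbc'⟩ := aux_card3_distinct h3bc
        obtain ⟨ℓ, hℓ⟩ := aux_orient_surj hfbc h3bc (aux_mem_triple_left a b c)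
        set o := Δ.orient ({a, b, c} : Finset (Fin N)) with ho
        have hinj := aux_orient_inj hfbc h3bc
        have h1m := aux_orient_mem hfbc h3bc (ℓ+1)
        have h2m := aux_orient_mem hfbc h3bc (ℓ+2)
        have hne1 : o (ℓ+1) ≠ a := by
          rw [← hℓ]
          intro h
          exact aux_fin3_add_one_ne ℓ (hinj h)
        have hne2 : o (ℓ+2) ≠ a := by
          rw [← hℓ]
          intro h
          exact aux_fin3_add_two_ne ℓ (hinj h)
        have hne12 : o (ℓ+1) ≠ o (ℓ+2) := fun h => aux_fin3_succ_ne ℓ (hinj h)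
        simp only [Finset.mem_insert, Finset.mem_singleton] at h1m h2m
        have hm1 : o (ℓ+1) = b ∨ o (ℓ+1) = c := by tauto
        have hm2 : o (ℓ+2) = b ∨ o (ℓ+2) = c := by tauto
        have hpair : (o (ℓ+1) = b ∧ o (ℓ+2) = c) ∨ (o (ℓ+1) = c ∧ o (ℓ+2) = b) := by
          rcases hm1 with h1 | h1 <;> rcases hm2 with h2 | h2
          · exact absurd (h1.trans h2.symm) hne12
          · exact Or.inl ⟨h1, h2⟩
          · exact Or.inr ⟨h1, h2⟩
          · exact absurd (h1.trans h2.symm) hne12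
        have hedge : edgeLen Q o ℓ = ‖Q b - Q c‖ := by
          rcases hpair with ⟨h1, h2⟩ | ⟨h1, h2⟩
          · rw [edgeLen, h1, h2]
          · rw [edgeLen, h1, h2, norm_sub_rev]
        have hh := aux_height_pos hQ hfbc h3bc ℓ
        have hEpos := aux_edgeLen_pos hQ hfbc h3bc ℓ
        have hff : β1 / height Q o ℓ ≤ f :=
          aux_ffun_ge_height (Qref := Qref) hβ1.le hβ2.le hβ3 hQ hfbc h3bc ℓ
        have hdiv : β1 / f ≤ height Q o ℓ := aux_div_f_le_height hβ1 hf hh hff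
        have hρh : ρ < height Q o ℓ := by
          calc ρ < min β1 β2 / (Real.sqrt 2 * f) := hcon
            _ ≤ β1 / f := hred1
            _ ≤ height Q o ℓ := hdiv
        have hheight : height Q o ℓ = 2 * signedArea Q o / edgeLen Q o ℓ := rfl
        have h2sA : ρ * edgeLen Q o ℓ < 2 * signedArea Q o := by
          rw [hheight, lt_div_iff₀ hEpos] at hρh
          linarith
        rw [hedge] at h2sA
        rw [aux_abs_det2_face hQ hfbc h3bc (aux_mem_triple_left a b c)
          (aux_mem_triple_mid a b c) (aux_mem_triple_right a b c) hab' hac' hbc']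
        exact h2sA
      obtain ⟨σ, hσf, hσ3, haσ, hmem⟩ :=
        aux_starCover Δ Q hQ a hav hnb ρ hρpos hsmall (Q i0) rfl
      have hi0σ : i0 ∉ σ := by
        intro hmem'
        apply hface
        apply Δ.toConnectivityComplex.down_closed σ hσf
        · intro t ht
          simp only [Finset.mem_insert, Finset.mem_singleton] at ht
          rcases ht with rfl | rfl <;> assumption
        · exact ⟨i0, by simp⟩
      exact absurd hmem (aux_not_mem_hull hQ.1 hσf hv hi0σ)

end VertexBound

set_option maxHeartbeats 4000000 in
/-- Lower bound on the distance from a boundary vertex to a non-incident interior 1-face. -/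
theorem stmt13 {N : ℕ} (hN : 3 ≤ N) (Δ : OrientedComplex N)
    (Qref : Fin N → Pt) (href : Qref ∈ Mplus Δ)
    (β1 β2 β3 : ℝ) (hβ1 : 0 ≤ β1) (hβ2 : 0 ≤ β2) (hβ3 : 0 ≤ β3)
    (Q : Fin N → Pt) (hQ : Q ∈ Mplus Δ)
    (i0 j0 j1 : Fin N) (hv : ({i0} : Finset (Fin N)) ∈ Δ.faces)
    (he : ({j0, j1} : Finset (Fin N)) ∈ Δ.faces) (hj01 : j0 ≠ j1)
    (hdisj : Q i0 ∉ segment ℝ (Q j0) (Q j1))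
    (hbv : i0 ∈ boundaryVertices Δ)
    (hie : IsInteriorEdge Δ ({j0, j1} : Finset (Fin N))) :
    min β1 β2 / (Real.sqrt 2 * ffun Δ Qref β1 β2 β3 Q) *
        sInf ((fun θ => Real.sqrt (1 - Real.cos θ ^ 2)) '' ThetaSet Δ Q j0 j1)
      ≤ Dpair Q i0 j0 j1 := by
  classical
  have hdp0 : 0 ≤ Dpair Q i0 j0 j1 := aux_dpair_nonneg
  rcases eq_or_lt_of_le (le_min hβ1 hβ2 : (0:ℝ) ≤ min β1 β2) with hmin0 | hminpos
  · rw [← hmin0, zero_div, zero_mul]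
    exact hdp0
  have hβ1' : 0 < β1 := lt_of_lt_of_le hminpos (min_le_left _ _)
  have hβ2' : 0 < β2 := lt_of_lt_of_le hminpos (min_le_right _ _)
  set f := ffun Δ Qref β1 β2 β3 Q with hfdef
  obtain ⟨τ0, hτ0f, hτ03, hτ0sub⟩ := Δ.toConnectivityComplex.pure _ he
  have hfpos : 0 < f :=
    lt_of_lt_of_le (div_pos hβ1' (aux_height_pos hQ hτ0f hτ03 0))
      (aux_ffun_ge_height (Qref := Qref) hβ1 hβ2 hβ3 hQ hτ0f hτ03 0)
  have hs2 : (1:ℝ) ≤ Real.sqrt 2 := by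
    rw [show (1:ℝ) = Real.sqrt 1 by rw [Real.sqrt_one]]
    exact Real.sqrt_le_sqrt (by norm_num)
  set c := min β1 β2 / (Real.sqrt 2 * f) with hcdef
  have hc0 : 0 ≤ c := by positivity
  have hcβ1 : c ≤ β1 / f := by
    rw [hcdef, div_le_div_iff₀ (by positivity) hfpos]
    have c1 : min β1 β2 * f ≤ β1 * f := mul_le_mul_of_nonneg_right (min_le_left _ _) hfpos.le
    have c2 : β1 * f ≤ β1 * (Real.sqrt 2 * f) :=
      mul_le_mul_of_nonneg_left (by nlinarith) hβ1
    linarith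
  -- basic geometry of the edge
  have hQj01 : Q j0 ≠ Q j1 :=
    aux_face_ne hQ hτ0f hτ03 (hτ0sub (by simp)) (hτ0sub (by simp)) hj01
  have hyne : Q j1 - Q j0 ≠ 0 := sub_ne_zero_of_ne (Ne.symm hQj01)
  have hL : (0:ℝ) < ‖Q j1 - Q j0‖ := norm_pos_iff.mpr hyne
  -- singleton faces, vertex bounds
  have hj0f : ({j0} : Finset (Fin N)) ∈ Δ.faces :=
    Δ.toConnectivityComplex.down_closed _ he _ (by intro t ht; simp at ht; simp [ht]) ⟨j0, by simp⟩
  have hj1f : ({j1} : Finset (Fin N)) ∈ Δ.faces :=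
    Δ.toConnectivityComplex.down_closed _ he _ (by intro t ht; simp at ht; simp [ht]) ⟨j1, by simp⟩
  have hneJ0 : Q i0 ≠ Q j0 := by
    intro h
    exact hdisj (by rw [h]; exact left_mem_segment ℝ _ _)
  have hneJ1 : Q i0 ≠ Q j1 := by
    intro h
    exact hdisj (by rw [h]; exact right_mem_segment ℝ _ _)
  have hVB0 : c ≤ ‖Q i0 - Q j0‖ :=
    aux_vertex_bound Δ Qref Q hQ hβ1' hβ2' hβ3 hfpos hv hj0f hbv hneJ0
  have hVB1 : c ≤ ‖Q i0 - Q j1‖ :=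
    aux_vertex_bound Δ Qref Q hQ hβ1' hβ2' hβ3 hfpos hv hj1f hbv hneJ1
  -- the two triangles adjacent to the edge
  obtain ⟨hef, he2, hcard2⟩ := hie
  obtain ⟨σ1, σ2, hσ12ne, hfilt⟩ := Finset.card_eq_two.mp hcard2
  have hσ1mem : σ1 ∈ Δ.faces.filter
      (fun σ => σ.card = 3 ∧ ({j0, j1} : Finset (Fin N)) ⊆ σ) := by rw [hfilt]; simp
  have hσ2mem : σ2 ∈ Δ.faces.filter
      (fun σ => σ.card = 3 ∧ ({j0, j1} : Finset (Fin N)) ⊆ σ) := by rw [hfilt]; simp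
  obtain ⟨hσ1f, hσ13, hσ1sub⟩ := Finset.mem_filter.mp hσ1mem
  obtain ⟨hσ2f, hσ23, hσ2sub⟩ := Finset.mem_filter.mp hσ2mem
  obtain ⟨k1, hk1σ, hk1j0, hk1j1, hσ1eq⟩ :=
    aux_face_third hσ13 (hσ1sub (by simp)) (hσ1sub (by simp)) hj01
  obtain ⟨k2, hk2σ, hk2j0, hk2j1, hσ2eq⟩ :=
    aux_face_third hσ23 (hσ2sub (by simp)) (hσ2sub (by simp)) hj01
  have hf1 : ({j0, j1, k1} : Finset (Fin N)) ∈ Δ.faces := hσ1eq ▸ hσ1f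
  have hf2 : ({j0, j1, k2} : Finset (Fin N)) ∈ Δ.faces := hσ2eq ▸ hσ2f
  have h31 : ({j0, j1, k1} : Finset (Fin N)).card = 3 := hσ1eq ▸ hσ13
  have h32 : ({j0, j1, k2} : Finset (Fin N)).card = 3 := hσ2eq ▸ hσ23
  have hσσne : ({j0, j1, k1} : Finset (Fin N)) ≠ ({j0, j1, k2} : Finset (Fin N)) := by
    rw [← hσ1eq, ← hσ2eq]; exact hσ12ne
  have hopp := aux_opposite_sides hQ (x := j0) (w := j1) (c1 := k1) (c2 := k2)
    hf1 hf2 h31 h32 hσσne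
  -- a sample angle in ThetaSet, for the crude bounds
  have hθ1mem : InnerProductGeometry.angle (Q j1 - Q j0) (Q k1 - Q j0)
      ∈ ThetaSet Δ Q j0 j1 :=
    ⟨{j0, j1, k1}, hf1, h31, by simp, by simp, k1, by simp, hk1j0, hk1j1, Or.inl rfl⟩
  -- bounded below
  have hSbdd : BddBelow ((fun θ => Real.sqrt (1 - Real.cos θ ^ 2)) '' ThetaSet Δ Q j0 j1) := by
    refine ⟨0, ?_⟩
    rintro r ⟨θ, -, rfl⟩
    exact Real.sqrt_nonneg _
  -- main reduction: find one good angle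
  have hmain : ∀ θ ∈ ThetaSet Δ Q j0 j1,
      c * Real.sqrt (1 - Real.cos θ ^ 2) ≤ Dpair Q i0 j0 j1 →
      c * sInf ((fun θ => Real.sqrt (1 - Real.cos θ ^ 2)) '' ThetaSet Δ Q j0 j1)
        ≤ Dpair Q i0 j0 j1 := by
    intro θ hθ hle
    have h1 : sInf ((fun θ => Real.sqrt (1 - Real.cos θ ^ 2)) '' ThetaSet Δ Q j0 j1)
        ≤ Real.sqrt (1 - Real.cos θ ^ 2) := csInf_le hSbdd ⟨θ, hθ, rfl⟩
    calc c * sInf _ ≤ c * Real.sqrt (1 - Real.cos θ ^ 2) := mul_le_mul_of_nonneg_left h1 hc0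
      _ ≤ Dpair Q i0 j0 j1 := hle
  -- crude bound: if Dpair ≥ some quantity ≥ c we are done
  have hcrude : c ≤ Dpair Q i0 j0 j1 →
      c * sInf ((fun θ => Real.sqrt (1 - Real.cos θ ^ 2)) '' ThetaSet Δ Q j0 j1)
        ≤ Dpair Q i0 j0 j1 := by
    intro hcd
    apply hmain _ hθ1mem
    calc c * Real.sqrt (1 - Real.cos (InnerProductGeometry.angle (Q j1 - Q j0) (Q k1 - Q j0)) ^ 2)
        ≤ c * 1 := mul_le_mul_of_nonneg_left (aux_sin_le_one _) hc0
      _ = c := mul_one c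
      _ ≤ Dpair Q i0 j0 j1 := hcd
  by_cases hv0 : det2 (Q j1 - Q j0) (Q i0 - Q j0) = 0
  · -- p on the line through the edge, outside the segment
    set μ := (inner ℝ (Q i0 - Q j0) (Q j1 - Q j0) : ℝ) / ‖Q j1 - Q j0‖ ^ 2 with hμ
    have hyn2 : ‖Q j1 - Q j0‖ ^ 2 ≠ 0 := by positivity
    have hcol : Q i0 - Q j0 = μ • (Q j1 - Q j0) := by
      have hd : (Q j1 - Q j0) 0 * (Q i0 - Q j0) 1 - (Q j1 - Q j0) 1 * (Q i0 - Q j0) 0 = 0 := hv0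
      have hn2 : ‖Q j1 - Q j0‖ ^ 2 = ((Q j1 - Q j0) 0) ^ 2 + ((Q j1 - Q j0) 1) ^ 2 :=
        aux_normsq _
      have hi2 : (inner ℝ (Q i0 - Q j0) (Q j1 - Q j0) : ℝ)
          = (Q i0 - Q j0) 0 * (Q j1 - Q j0) 0 + (Q i0 - Q j0) 1 * (Q j1 - Q j0) 1 :=
        aux_inner2 _ _
      have hn2ne : ((Q j1 - Q j0) 0) ^ 2 + ((Q j1 - Q j0) 1) ^ 2 ≠ 0 := by
        rw [← hn2]; exact hyn2
      ext idx
      fin_cases idx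
      · show (Q i0 - Q j0) 0 = (μ • (Q j1 - Q j0)) 0
        rw [PiLp.smul_apply, smul_eq_mul, hμ, hi2, hn2, div_mul_eq_mul_div, eq_div_iff hn2ne]
        linear_combination (-((Q j1 - Q j0) 1)) * hd
      · show (Q i0 - Q j0) 1 = (μ • (Q j1 - Q j0)) 1
        rw [PiLp.smul_apply, smul_eq_mul, hμ, hi2, hn2, div_mul_eq_mul_div, eq_div_iff hn2ne]
        linear_combination ((Q j1 - Q j0) 0) * hd
    have hμrange : μ < 0 ∨ 1 < μ := by
      by_contra hcon'
      push_neg at hcon'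
      apply hdisj
      refine ⟨1 - μ, μ, by linarith [hcon'.2], by linarith [hcon'.1], by ring, ?_⟩
      have hps : Q i0 = μ • (Q j1 - Q j0) + Q j0 := by
        rw [← hcol]; abel
      rw [hps]
      module
    rcases hμrange with hμn | hμg
    · have hip : (inner ℝ (Q i0 - Q j0) (Q j1 - Q j0) : ℝ) ≤ 0 := by
        rw [hcol, real_inner_smul_left]
        nlinarith [real_inner_self_nonneg (x := Q j1 - Q j0)]
      exact hcrude (le_trans hVB0 (aux_dpair_ge_normA hQj01 hip))
    · have hip : 0 ≤ (inner ℝ (Q i0 - Q j1) (Q j1 - Q j0) : ℝ) := by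
        have hsplit : Q i0 - Q j1 = (μ - 1) • (Q j1 - Q j0) := by
          have : Q i0 - Q j1 = (Q i0 - Q j0) - (Q j1 - Q j0) := by abel
          rw [this, hcol]
          module
        rw [hsplit, real_inner_smul_left]
        nlinarith [real_inner_self_nonneg (x := Q j1 - Q j0)]
      exact hcrude (le_trans hVB1 (aux_dpair_ge_normB hQj01 hip))
  · -- p off the line: select the triangle on the same side as p
    set v := det2 (Q j1 - Q j0) (Q i0 - Q j0) with hvdef
    have hselect : ∃ k : Fin N, ({j0, j1, k} : Finset (Fin N)) ∈ Δ.faces ∧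
        ({j0, j1, k} : Finset (Fin N)).card = 3 ∧ k ≠ j0 ∧ k ≠ j1 ∧
        0 < v * det2 (Q j1 - Q j0) (Q k - Q j0) := by
      rcases mul_neg_iff.mp hopp with ⟨h1pos, h2neg⟩ | ⟨h1neg, h2pos⟩ <;>
        rcases lt_or_gt_of_ne hv0 with hvneg | hvpos
      · exact ⟨k2, hf2, h32, hk2j0, hk2j1, mul_pos_of_neg_of_neg hvneg h2neg⟩
      · exact ⟨k1, hf1, h31, hk1j0, hk1j1, mul_pos hvpos h1pos⟩
      · exact ⟨k1, hf1, h31, hk1j0, hk1j1, mul_pos_of_neg_of_neg hvneg h1neg⟩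
      · exact ⟨k2, hf2, h32, hk2j0, hk2j1, mul_pos hvpos h2pos⟩
    obtain ⟨k, hkf, hk3, hkj0, hkj1, hside0⟩ := hselect
    set dk := det2 (Q j1 - Q j0) (Q k - Q j0) with hdkdef
    have hdkne : dk ≠ 0 := by
      intro h
      rw [h, mul_zero] at hside0
      exact lt_irrefl _ hside0
    have habsdk : |dk| = 2 * signedArea Q (Δ.orient ({j0, j1, k} : Finset (Fin N))) :=
      aux_abs_det2_face hQ hkf hk3 (aux_mem_triple_left j0 j1 k) (aux_mem_triple_mid j0 j1 k)
        (aux_mem_triple_right j0 j1 k) hj01 (Ne.symm hkj0) (Ne.symm hkj1)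
    have hQkj0 : Q k ≠ Q j0 :=
      aux_face_ne hQ hkf hk3 (aux_mem_triple_right j0 j1 k) (aux_mem_triple_left j0 j1 k) hkj0
    have hQkj1 : Q k ≠ Q j1 :=
      aux_face_ne hQ hkf hk3 (aux_mem_triple_right j0 j1 k) (aux_mem_triple_mid j0 j1 k) hkj1
    have hDv : |v| / ‖Q j1 - Q j0‖ ≤ Dpair Q i0 j0 j1 := aux_dpair_ge_v hQj01
    -- the height of the selected triangle through its apex equals 2 sA / L
    have hapexht : β1 / f ≤ |dk| / ‖Q j1 - Q j0‖ := by
      obtain ⟨ℓ, hℓ⟩ := aux_orient_surj hkf hk3 (aux_mem_triple_right j0 j1 k)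
      set o := Δ.orient ({j0, j1, k} : Finset (Fin N)) with ho
      have hinj := aux_orient_inj hkf hk3
      have h1m := aux_orient_mem hkf hk3 (ℓ+1)
      have h2m := aux_orient_mem hkf hk3 (ℓ+2)
      have hne1 : o (ℓ+1) ≠ k := by
        rw [← hℓ]; intro h; exact aux_fin3_add_one_ne ℓ (hinj h)
      have hne2 : o (ℓ+2) ≠ k := by
        rw [← hℓ]; intro h; exact aux_fin3_add_two_ne ℓ (hinj h)
      have hne12 : o (ℓ+1) ≠ o (ℓ+2) := fun h => aux_fin3_succ_ne ℓ (hinj h)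
      simp only [Finset.mem_insert, Finset.mem_singleton] at h1m h2m
      have hm1 : o (ℓ+1) = j0 ∨ o (ℓ+1) = j1 := by tauto
      have hm2 : o (ℓ+2) = j0 ∨ o (ℓ+2) = j1 := by tauto
      have hedge : edgeLen Q o ℓ = ‖Q j1 - Q j0‖ := by
        rcases hm1 with h1 | h1 <;> rcases hm2 with h2 | h2
        · exact absurd (h1.trans h2.symm) hne12
        · rw [edgeLen, h1, h2, norm_sub_rev]
        · rw [edgeLen, h1, h2]
        · exact absurd (h1.trans h2.symm) hne12
      have hh := aux_height_pos hQ hkf hk3 ℓ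
      have hff : β1 / height Q o ℓ ≤ f :=
        aux_ffun_ge_height (Qref := Qref) hβ1 hβ2 hβ3 hQ hkf hk3 ℓ
      have hdiv : β1 / f ≤ height Q o ℓ := aux_div_f_le_height hβ1' hfpos hh hff
      have hhval : height Q o ℓ = |dk| / ‖Q j1 - Q j0‖ := by
        rw [height, hedge, habsdk, ho]
      rw [hhval] at hdiv
      exact hdiv
    by_cases hi0σ : i0 ∈ ({j0, j1, k} : Finset (Fin N))
    · -- p is the apex of the selected triangle
      have hi0k : i0 = k := by
        simp only [Finset.mem_insert, Finset.mem_singleton] at hi0σ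
        rcases hi0σ with h | h | h
        · exact absurd (congrArg Q h) hneJ0
        · exact absurd (congrArg Q h) hneJ1
        · exact h
      have hvk : v = dk := by rw [hvdef, hdkdef, hi0k]
      apply hcrude
      calc c ≤ β1 / f := hcβ1
        _ ≤ |dk| / ‖Q j1 - Q j0‖ := hapexht
        _ = |v| / ‖Q j1 - Q j0‖ := by rw [hvk]
        _ ≤ Dpair Q i0 j0 j1 := hDv
    · -- p is outside the selected triangle
      have hph : Q i0 ∉ convexHull ℝ (Q '' ((({j0, j1, k} : Finset (Fin N))) : Set (Fin N))) :=
        aux_not_mem_hull hQ.1 hkf hv hi0σ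
      set X := det2 (Q i0 - Q j0) (Q k - Q j0) with hXdef
      have hnotin : ¬ (0 ≤ X / dk ∧ X / dk + v / dk ≤ 1) := by
        rintro ⟨hs, hst⟩
        apply hph
        rw [aux_image_triple]
        have ht : 0 ≤ v / dk := by
          rcases mul_pos_iff.mp hside0 with ⟨a1, a2⟩ | ⟨a1, a2⟩
          · exact (div_pos a1 a2).le
          · exact (div_pos_of_neg_of_neg a1 a2).le
        have hcram := aux_cramer (e1 := Q j1 - Q j0) (e2 := Q k - Q j0) hdkne (Q i0 - Q j0)
        have hmem := aux_mem_hull_triple (P0 := Q j0) (P1 := Q j1) (P2 := Q k)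
          (c0 := 1 - X / dk - v / dk) (c1 := X / dk) (c2 := v / dk)
          (by linarith) hs ht (by ring)
        have hzeq : (1 - X / dk - v / dk) • Q j0 + (X / dk) • Q j1 + (v / dk) • Q k
            = Q i0 := by
          have h := hcram
          rw [sub_eq_iff_eq_add] at h
          rw [h, hXdef, hvdef, hdkdef]
          -- note: in hcram the first coefficient is det2 (Qi0−Qj0) (Qk−Qj0) / dk = X/dk,
          -- the second is det2 (Qj1−Qj0) (Qi0−Qj0) / dk = v/dk
          module
        rw [← hzeq]
        exact hmem
      push_neg at hnotin
      by_cases hs : 0 ≤ X / dk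
      · -- beyond the far edge at j1
        have hst : 1 < X / dk + v / dk := hnotin hs
        by_cases hb1 : 0 ≤ (inner ℝ (Q i0 - Q j1) (Q j1 - Q j0) : ℝ)
        · exact hcrude (le_trans hVB1 (aux_dpair_ge_normB hQj01 hb1))
        · push_neg at hb1
          -- sideBound at j1 with w = p − B, y = A − B, z = K − B
          have hwy : 0 ≤ (inner ℝ (Q i0 - Q j1) (Q j0 - Q j1) : ℝ) := by
            have hrw : Q j0 - Q j1 = -(Q j1 - Q j0) := by abel
            rw [hrw, inner_neg_right]
            linarith
          have hid1 : det2 (Q j0 - Q j1) (Q i0 - Q j1) = -v := by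
            rw [hvdef]; simp only [det2, PiLp.sub_apply]; ring
          have hid2 : det2 (Q j0 - Q j1) (Q k - Q j1) = -dk := by
            rw [hdkdef]; simp only [det2, PiLp.sub_apply]; ring
          have hid3 : det2 (Q i0 - Q j1) (Q k - Q j1) = X + v - dk := by
            rw [hXdef, hvdef, hdkdef]; simp only [det2, PiLp.sub_apply]; ring
          have hstdk : 0 < (X + v - dk) * dk := by
            have hdk2 : (0:ℝ) < dk ^ 2 :=
              lt_of_le_of_ne (sq_nonneg _) (Ne.symm (pow_ne_zero 2 hdkne))
            have h1 : 0 < (X / dk + v / dk - 1) := by linarith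
            have h2 : (X / dk + v / dk - 1) * dk ^ 2 = (X + v - dk) * dk := by
              field_simp
            nlinarith [mul_pos h1 hdk2]
          have hsideB : 0 < det2 (Q j0 - Q j1) (Q i0 - Q j1) * det2 (Q j0 - Q j1) (Q k - Q j1) := by
            rw [hid1, hid2]
            nlinarith [hside0]
          have hsB : det2 (Q i0 - Q j1) (Q k - Q j1) * det2 (Q j0 - Q j1) (Q k - Q j1) < 0 := by
            rw [hid3, hid2]
            nlinarith [hstdk]
          have hSB := aux_sideBound (w := Q i0 - Q j1) (y := Q j0 - Q j1) (z := Q k - Q j1)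
            (sub_ne_zero_of_ne hQj01) hwy hsideB hsB
          -- conclude
          have hsin : Real.sqrt (1 - Real.cos
              (InnerProductGeometry.angle (Q j0 - Q j1) (Q k - Q j1)) ^ 2)
              = |dk| / (‖Q j1 - Q j0‖ * ‖Q k - Q j1‖) := by
            rw [aux_sin_angle _ _ (sub_ne_zero_of_ne hQj01) (sub_ne_zero_of_ne hQkj1), hid2,
              abs_neg]
            rw [show ‖Q j0 - Q j1‖ = ‖Q j1 - Q j0‖ from norm_sub_rev _ _]
          have hθmem : InnerProductGeometry.angle (Q j0 - Q j1) (Q k - Q j1)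
              ∈ ThetaSet Δ Q j0 j1 :=
            ⟨{j0, j1, k}, hkf, hk3, by simp, by simp, k, by simp, hkj0, hkj1, Or.inr rfl⟩
          apply hmain _ hθmem
          rw [hsin]
          have hnKB : (0:ℝ) < ‖Q k - Q j1‖ := norm_pos_iff.mpr (sub_ne_zero_of_ne hQkj1)
          have hchain1 : c * (|dk| / (‖Q j1 - Q j0‖ * ‖Q k - Q j1‖))
              ≤ ‖Q i0 - Q j1‖ * (|dk| / (‖Q j1 - Q j0‖ * ‖Q k - Q j1‖)) :=
            mul_le_mul_of_nonneg_right hVB1 (by positivity)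
          have hSB' : ‖Q i0 - Q j1‖ * |det2 (Q j0 - Q j1) (Q k - Q j1)|
              ≤ |det2 (Q j0 - Q j1) (Q i0 - Q j1)| * ‖Q k - Q j1‖ := hSB
          rw [hid1, hid2, abs_neg, abs_neg] at hSB'
          have hchain2 : ‖Q i0 - Q j1‖ * (|dk| / (‖Q j1 - Q j0‖ * ‖Q k - Q j1‖))
              ≤ |v| / ‖Q j1 - Q j0‖ := by
            rw [mul_div_assoc', div_le_div_iff₀ (by positivity) hL]
            nlinarith [hSB', hL, hnKB]
          linarith [hDv]
      · -- beyond the far edge at j0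
        push_neg at hs
        by_cases ha1 : (inner ℝ (Q i0 - Q j0) (Q j1 - Q j0) : ℝ) ≤ 0
        · exact hcrude (le_trans hVB0 (aux_dpair_ge_normA hQj01 ha1))
        · push_neg at ha1
          have hXdk : X * dk < 0 := by
            have hdk2 : (0:ℝ) < dk ^ 2 :=
              lt_of_le_of_ne (sq_nonneg _) (Ne.symm (pow_ne_zero 2 hdkne))
            have h2 : (X / dk) * dk ^ 2 = X * dk := by field_simp
            nlinarith [mul_neg_of_neg_of_pos hs hdk2]
          have hSA := aux_sideBound (w := Q i0 - Q j0) (y := Q j1 - Q j0) (z := Q k - Q j0)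
            hyne ha1.le (by rw [← hvdef, ← hdkdef]; exact hside0)
            (by rw [← hdkdef]
                have : det2 (Q i0 - Q j0) (Q k - Q j0) = X := by rw [hXdef]
                rw [this]
                exact hXdk)
          have hsin : Real.sqrt (1 - Real.cos
              (InnerProductGeometry.angle (Q j1 - Q j0) (Q k - Q j0)) ^ 2)
              = |dk| / (‖Q j1 - Q j0‖ * ‖Q k - Q j0‖) := by
            rw [aux_sin_angle _ _ hyne (sub_ne_zero_of_ne hQkj0), ← hdkdef]
          have hθmem : InnerProductGeometry.angle (Q j1 - Q j0) (Q k - Q j0)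
              ∈ ThetaSet Δ Q j0 j1 :=
            ⟨{j0, j1, k}, hkf, hk3, by simp, by simp, k, by simp, hkj0, hkj1, Or.inl rfl⟩
          apply hmain _ hθmem
          rw [hsin]
          have hnKA : (0:ℝ) < ‖Q k - Q j0‖ := norm_pos_iff.mpr (sub_ne_zero_of_ne hQkj0)
          have hchain1 : c * (|dk| / (‖Q j1 - Q j0‖ * ‖Q k - Q j0‖))
              ≤ ‖Q i0 - Q j0‖ * (|dk| / (‖Q j1 - Q j0‖ * ‖Q k - Q j0‖)) :=
            mul_le_mul_of_nonneg_right hVB0 (by positivity)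
          have hSA' : ‖Q i0 - Q j0‖ * |dk| ≤ |v| * ‖Q k - Q j0‖ := by
            have := hSA
            rw [← hvdef, ← hdkdef] at this
            exact this
          have hchain2 : ‖Q i0 - Q j0‖ * (|dk| / (‖Q j1 - Q j0‖ * ‖Q k - Q j0‖))
              ≤ |v| / ‖Q j1 - Q j0‖ := by
            rw [mul_div_assoc', div_le_div_iff₀ (by positivity) hL]
            nlinarith [hSA', hL, hnKA]
          linarith [hDv]

end PlanarMesh
end
end

section
/- Let T : ℝ² → ℝ² be a rigid motion T(x) = Rx + b with R ∈ SO(2) and b ∈ ℝ², extended columnwise to ℝ^{2×N_V}. For Q ∈ M_Δ(Q_ref) and V, W ∈ ℝ^{2×N_V}, let g_Q(V,W) := trace(VᵀW) + (Df^μ(Q;Q_ref)[V])·(Df^μ(Q;Q_ref)[W]), and let ḡ be the analogous bilinear form obtained by replacing Q_ref with T(Q_ref) in f^μ. Then g_Q(V,W) = ḡ_{T(Q)}(RV, RW) for all Q ∈ M_Δ(Q_ref) and all V, W ∈ ℝ^{2×N_V}. -/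
open scoped RealInnerProductSpace
open scoped Classical

noncomputable section

namespace PlanarMesh

variable {N : ℕ}

variable (Δ : OrientedComplex N)

/-- The regularized augmentation function `f^μ`, built from an abstract regularized
vertex-edge distance `d`. -/
def fmu (Δ : OrientedComplex N) (d : (Fin N → Pt) → Fin N → Finset (Fin N) → ℝ)
    (Qref : Fin N → Pt) (β1 β2 β3 : ℝ) (Q : Fin N → Pt) : ℝ :=
  (∑ σ ∈ twoFaces Δ, ∑ ℓ : Fin 3, β1 / height Q (Δ.orient σ) ℓ)
  + (∑ e ∈ boundaryEdges Δ,
      ∑ i ∈ (boundaryVertices Δ).filter (fun i => i ∉ e), β2 / d Q i e)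
  + β3 / 2 * frobSq Q Qref

/-- The action of a rigid motion `x ↦ R x + b` on a configuration, column by column. -/
def rigidAct (R : Pt ≃ₗᵢ[ℝ] Pt) (b : Pt) (Q : Fin N → Pt) : Fin N → Pt :=
  fun k => R (Q k) + b

/-- The Riemannian metric `g_Q(V,W) = trace(VᵀW) + Df^μ(Q)[V] · Df^μ(Q)[W]`. -/
def metricG (Δ : OrientedComplex N) (d : (Fin N → Pt) → Fin N → Finset (Fin N) → ℝ)
    (Qref : Fin N → Pt) (β1 β2 β3 : ℝ) (Q V W : Fin N → Pt) : ℝ :=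
  (∑ i, ⟪V i, W i⟫)
    + fderiv ℝ (fmu Δ d Qref β1 β2 β3) Q V * fderiv ℝ (fmu Δ d Qref β1 β2 β3) Q W

lemma det2_map (f : Pt →ₗ[ℝ] Pt) (v w : Pt) :
    det2 (f v) (f w) = LinearMap.det f * det2 v w := by
  classical
  set B := (EuclideanSpace.basisFun (Fin 2) ℝ).toBasis with hB
  set M := LinearMap.toMatrix B B f with hM
  have hdet : LinearMap.det f = M.det := (LinearMap.det_toMatrix B f).symm
  have happ : ∀ (x : Pt) (i : Fin 2), f x i = M i 0 * x 0 + M i 1 * x 1 := by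
    intro x i
    have h1 : B.repr (f x) = M.mulVec (B.repr x) :=
      (LinearMap.toMatrix_mulVec_repr B B f x).symm
    have h2 : ∀ (y : Pt) (j : Fin 2), B.repr y j = y j := by
      intro y j
      simp [hB, OrthonormalBasis.coe_toBasis_repr_apply, EuclideanSpace.basisFun_repr]
    rw [show f x i = B.repr (f x) i from (h2 _ _).symm, h1]
    simp [Matrix.mulVec, dotProduct, Fin.sum_univ_two, h2]
  rw [hdet, Matrix.det_fin_two]
  simp only [det2, happ]
  ring

lemma rigidAct_sub (R : Pt ≃ₗᵢ[ℝ] Pt) (b : Pt) (P P' : Fin N → Pt) (x y : Fin N) :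
    rigidAct R b P x - rigidAct R b P' y = R (P x - P' y) := by
  simp only [rigidAct, map_sub]
  abel

lemma signedArea_rigid (R : Pt ≃ₗᵢ[ℝ] Pt)
    (hR : LinearMap.det (R.toLinearEquiv : Pt →ₗ[ℝ] Pt) = 1) (b : Pt)
    (P : Fin N → Pt) (o : Fin 3 → Fin N) :
    signedArea (rigidAct R b P) o = signedArea P o := by
  unfold signedArea
  rw [rigidAct_sub, rigidAct_sub,
    show (R (P (o 1) - P (o 0))) = (R.toLinearEquiv : Pt →ₗ[ℝ] Pt) (P (o 1) - P (o 0)) from rfl,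
    show (R (P (o 2) - P (o 1))) = (R.toLinearEquiv : Pt →ₗ[ℝ] Pt) (P (o 2) - P (o 1)) from rfl,
    det2_map, hR, one_mul]

lemma edgeLen_rigid (R : Pt ≃ₗᵢ[ℝ] Pt) (b : Pt)
    (P : Fin N → Pt) (o : Fin 3 → Fin N) (ℓ : Fin 3) :
    edgeLen (rigidAct R b P) o ℓ = edgeLen P o ℓ := by
  unfold edgeLen
  rw [rigidAct_sub, R.norm_map]

lemma height_rigid (R : Pt ≃ₗᵢ[ℝ] Pt)
    (hR : LinearMap.det (R.toLinearEquiv : Pt →ₗ[ℝ] Pt) = 1) (b : Pt)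
    (P : Fin N → Pt) (o : Fin 3 → Fin N) (ℓ : Fin 3) :
    height (rigidAct R b P) o ℓ = height P o ℓ := by
  unfold height
  rw [signedArea_rigid R hR b, edgeLen_rigid]

lemma frobSq_rigid (R : Pt ≃ₗᵢ[ℝ] Pt) (b : Pt) (P P' : Fin N → Pt) :
    frobSq (rigidAct R b P) (rigidAct R b P') = frobSq P P' := by
  unfold frobSq
  refine Finset.sum_congr rfl fun i _ => ?_
  rw [rigidAct_sub, R.norm_map]

lemma fmu_rigid (Δ : OrientedComplex N) (d : (Fin N → Pt) → Fin N → Finset (Fin N) → ℝ)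
    (hd_inv : ∀ (S : Pt ≃ₗᵢ[ℝ] Pt), LinearMap.det (S.toLinearEquiv : Pt →ₗ[ℝ] Pt) = 1 →
      ∀ (c : Pt) (Q : Fin N → Pt) (i : Fin N) (e : Finset (Fin N)),
        d (rigidAct S c Q) i e = d Q i e)
    (Qref : Fin N → Pt) (β1 β2 β3 : ℝ)
    (R : Pt ≃ₗᵢ[ℝ] Pt) (hR : LinearMap.det (R.toLinearEquiv : Pt →ₗ[ℝ] Pt) = 1) (b : Pt)
    (P : Fin N → Pt) :
    fmu Δ d (rigidAct R b Qref) β1 β2 β3 (rigidAct R b P) = fmu Δ d Qref β1 β2 β3 P := by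
  unfold fmu
  rw [frobSq_rigid]
  congr 2
  · refine Finset.sum_congr rfl fun σ _ => Finset.sum_congr rfl fun ℓ _ => ?_
    rw [height_rigid R hR b]
  · refine Finset.sum_congr rfl fun e _ => Finset.sum_congr rfl fun i _ => ?_
    rw [hd_inv R hR b]

lemma fderiv_fmu_rigid (Δ : OrientedComplex N)
    (d : (Fin N → Pt) → Fin N → Finset (Fin N) → ℝ)
    (hd_inv : ∀ (S : Pt ≃ₗᵢ[ℝ] Pt), LinearMap.det (S.toLinearEquiv : Pt →ₗ[ℝ] Pt) = 1 →
      ∀ (c : Pt) (Q : Fin N → Pt) (i : Fin N) (e : Finset (Fin N)),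
        d (rigidAct S c Q) i e = d Q i e)
    (Qref : Fin N → Pt) (β1 β2 β3 : ℝ)
    (R : Pt ≃ₗᵢ[ℝ] Pt) (hR : LinearMap.det (R.toLinearEquiv : Pt →ₗ[ℝ] Pt) = 1) (b : Pt)
    (Q V : Fin N → Pt) :
    fderiv ℝ (fmu Δ d (rigidAct R b Qref) β1 β2 β3) (rigidAct R b Q) (fun k => R (V k))
      = fderiv ℝ (fmu Δ d Qref β1 β2 β3) Q V := by
  classical
  set E : (Fin N → Pt) ≃L[ℝ] (Fin N → Pt) :=
    ContinuousLinearEquiv.piCongrRight (fun _ : Fin N => R.toContinuousLinearEquiv) with hE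
  have hEapp : ∀ (P : Fin N → Pt) (k : Fin N), E P k = R (P k) := fun _ _ => rfl
  set c : Fin N → Pt := fun _ => b with hc
  set g := fmu Δ d Qref β1 β2 β3 with hg
  set gbar := fmu Δ d (rigidAct R b Qref) β1 β2 β3 with hgbar
  have hT : ∀ P : Fin N → Pt, rigidAct R b P = E P + c := by
    intro P; funext k; simp [rigidAct, hEapp, hc]
  have hcomp : ∀ P : Fin N → Pt, g P = gbar (E P + c) := by
    intro P
    rw [← hT P, hgbar, hg, fmu_rigid Δ d hd_inv Qref β1 β2 β3 R hR b]
  have hTder : HasFDerivAt (fun P => E P + c)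
      (E : (Fin N → Pt) →L[ℝ] (Fin N → Pt)) Q :=
    ((E : (Fin N → Pt) →L[ℝ] (Fin N → Pt)).hasFDerivAt).add_const c
  have hEV : (E : (Fin N → Pt) →L[ℝ] (Fin N → Pt)) V = fun k => R (V k) := by
    funext k; exact hEapp V k
  by_cases hdiff : DifferentiableAt ℝ gbar (rigidAct R b Q)
  · have hdiff' : DifferentiableAt ℝ gbar (E Q + c) := by rwa [← hT Q]
    have hchain : HasFDerivAt g
        ((fderiv ℝ gbar (E Q + c)).comp (E : (Fin N → Pt) →L[ℝ] (Fin N → Pt))) Q := by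
      have := hdiff'.hasFDerivAt.comp Q hTder
      exact this.congr_of_eventuallyEq (Filter.Eventually.of_forall fun P => (hcomp P))
    rw [hchain.fderiv, hT Q]
    simp [ContinuousLinearMap.comp_apply, hEV]
  · -- both derivatives are junk (zero)
    have hndiff : ¬ DifferentiableAt ℝ g Q := by
      intro hgd
      apply hdiff
      have hTinv : ∀ P : Fin N → Pt, gbar P = g (E.symm (P - c)) := by
        intro P
        rw [hcomp (E.symm (P - c))]
        congr 1
        simp
      have hTinvder : DifferentiableAt ℝ (fun P : Fin N → Pt => E.symm (P - c))
          (rigidAct R b Q) := by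
        apply (E.symm : (Fin N → Pt) →L[ℝ] (Fin N → Pt)).differentiableAt.comp
        exact (differentiable_id.sub_const c).differentiableAt
      have hx : E.symm (rigidAct R b Q - c) = Q := by
        rw [hT Q]; simp
      have : DifferentiableAt ℝ (fun P : Fin N → Pt => g (E.symm (P - c)))
          (rigidAct R b Q) := by
        have hgd' : DifferentiableAt ℝ g (E.symm (rigidAct R b Q - c)) := by
          rwa [hx]
        exact hgd'.comp (rigidAct R b Q) hTinvder
      exact this.congr_of_eventuallyEq
        (Filter.Eventually.of_forall fun P => (hTinv P))
    rw [fderiv_zero_of_not_differentiableAt hdiff,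
      fderiv_zero_of_not_differentiableAt hndiff]
    rfl

/-- Invariance of the metric with respect to rigid motions of the plane:
`g_Q(V,W) = ḡ_{T(Q)}(RV, RW)`, where `ḡ` uses `T(Q_ref)` in place of `Q_ref`. -/
theorem stmt16 {N : ℕ} (hN : 3 ≤ N) (Δ : OrientedComplex N)
    (d : (Fin N → Pt) → Fin N → Finset (Fin N) → ℝ)
    (Qref : Fin N → Pt) (href : Qref ∈ Mplus Δ)
    (β1 β2 β3 : ℝ) (hβ1 : 0 ≤ β1) (hβ2 : 0 ≤ β2) (hβ3 : 0 ≤ β3)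
    -- `d` is continuously differentiable on `M⁺_Δ`
    (hd_smooth : ∀ (i : Fin N) (e : Finset (Fin N)),
      ContDiffOn ℝ 1 (fun Q => d Q i e) (Mplus Δ))
    -- `0 < d ≤ D` on `M⁺_Δ`
    (hd_pos : ∀ Q ∈ Mplus Δ, ∀ e ∈ boundaryEdges Δ,
      ∀ i ∈ (boundaryVertices Δ).filter (fun i => i ∉ e),
        0 < d Q i e ∧ d Q i e ≤ Dedge Q i e)
    -- `d` is invariant under rigid motions
    (hd_inv : ∀ (S : Pt ≃ₗᵢ[ℝ] Pt), LinearMap.det (S.toLinearEquiv : Pt →ₗ[ℝ] Pt) = 1 →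
      ∀ (c : Pt) (Q : Fin N → Pt) (i : Fin N) (e : Finset (Fin N)),
        d (rigidAct S c Q) i e = d Q i e)
    -- the rigid motion `T(x) = R x + b` with `R ∈ SO(2)`
    (R : Pt ≃ₗᵢ[ℝ] Pt) (hR : LinearMap.det (R.toLinearEquiv : Pt →ₗ[ℝ] Pt) = 1) (b : Pt)
    (Q : Fin N → Pt) (hQ : Q ∈ Mmesh Δ Qref) (V W : Fin N → Pt) :
    metricG Δ d Qref β1 β2 β3 Q V W
      = metricG Δ d (rigidAct R b Qref) β1 β2 β3 (rigidAct R b Q)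
          (fun k => R (V k)) (fun k => R (W k)) := by
  unfold metricG
  rw [fderiv_fmu_rigid Δ d hd_inv Qref β1 β2 β3 R hR b Q V,
    fderiv_fmu_rigid Δ d hd_inv Qref β1 β2 β3 R hR b Q W]
  congr 1
  exact Finset.sum_congr rfl fun i _ => (R.inner_map_map (V i) (W i)).symm

end PlanarMesh
end
end
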